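/- arXiv:1805.09167 — 9 statements merged into one kernel-verified Lean document; each statement's English description precedes it below -/
import Mathlib

section
/- Let X be a metrizable topological space and E an equivalence relation on X. Then exactly one of the following holds: (a) every equivalence class of E is open; (b) there is an injective continuous map f : 𝕂 → X such that either (i) f(x) E f(y) ⇔ x = y for all x, y ∈ 𝕂, or (ii) f(x) E f(y) ⇔ (x = y = 0 or (x ≠ 0 and y ≠ 0)) for all x, y ∈ 𝕂. -/
/-- The compact countable space 𝕂 = {0} ∪ {2^{-k} | k ∈ ℕ} ⊆ ℝ. -/
def Kspace : Set ℝ := insert 0 {x : ℝ | ∃ k : ℕ, x = (1 / 2 : ℝ) ^ k}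

/-!
If some class `S` of `E` is not open, pick `z ∈ S` in the closure of `Sᶜ` and an injective
sequence in `Sᶜ` converging to `z`. Infinite Ramsey for equivalence relations (either one class
is infinite or there are infinitely many classes) refines it to a subsequence whose terms are
all `E`-equivalent or pairwise inequivalent; since no term is equivalent to `z`, the sequence
together with its limit is a copy of `𝕂 ≃ₜ OnePoint ℕ` on which `E` is as in (ii) or (i).
Conversely, in both cases the class of the image of `0` contains no other image point, while
every neighbourhood of it contains the images of `2⁻ᵏ` for all large `k`.
-/

open Filter Function OnePoint Topology

theorem Equivalence.exists_injective_forall_or_forall_iff_eq {α : Type*} [Infinite α]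
    {r : α → α → Prop} (hr : Equivalence r) :
    ∃ φ : ℕ → α, Injective φ ∧ ((∀ i j, r (φ i) (φ j)) ∨ ∀ i j, r (φ i) (φ j) ↔ i = j) := by
  by_cases hclass : ∃ x, {y | r x y}.Infinite
  · obtain ⟨x, hx⟩ := hclass
    let e := Set.Infinite.natEmbedding _ hx
    exact ⟨(↑) ∘ e, Subtype.val_injective.comp e.injective,
      Or.inl fun i j => hr.trans (hr.symm (e i).2) (e j).2⟩
  · push Not at hclass
    let s : Setoid α := ⟨r, hr⟩
    have : Infinite (Quotient s) := by
      refine not_finite_iff_infinite.mp fun hfin => Set.infinite_univ_iff.mpr ‹_› ?_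
      refine (Set.finite_univ (α := Quotient s)).preimage' (f := Quotient.mk s) fun c _ => ?_
      induction c using Quotient.inductionOn with
      | h x => exact (hclass x).subset fun y hy => hr.symm (Quotient.exact hy)
    let e := Infinite.natEmbedding (Quotient s)
    exact ⟨fun i => (e i).out, fun i j hij => e.injective (by simpa using hij),
      Or.inr fun i j => Quotient.out_equiv_out.trans e.injective.eq_iff⟩

theorem exists_injective_tendsto_of_mem_closure {X : Type*} [TopologicalSpace X] [T1Space X]
    [FrechetUrysohnSpace X] {s : Set X} {z : X} (hz : z ∈ closure s) (hzs : z ∉ s) :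
    ∃ u : ℕ → X, Injective u ∧ (∀ n, u n ∈ s) ∧ Tendsto u atTop (𝓝 z) := by
  obtain ⟨v, hvs, hvz⟩ := mem_closure_iff_seq_limit.mp hz
  obtain ⟨φ, hφ, hconst | hinj⟩ :=
    (eq_equivalence.comap v).exists_injective_forall_or_forall_iff_eq
  · have hlim : Tendsto (fun _ : ℕ => v (φ 0)) atTop (𝓝 z) :=
      (hvz.comp hφ.nat_tendsto_atTop).congr fun j => (hconst 0 j).symm
    exact absurd (tendsto_const_nhds_iff.mp hlim ▸ hvs (φ 0)) hzs
  · exact ⟨v ∘ φ, fun i j hij => (hinj i j).mp hij, fun n => hvs (φ n),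
      hvz.comp hφ.nat_tendsto_atTop⟩

theorem OnePoint.elim_injective {X Y : Type*} {y : Y} {f : X → Y} (hf : Injective f)
    (hy : ∀ x, f x ≠ y) : Injective fun a : OnePoint X => a.elim y f := by
  intro a b hab
  cases a <;> cases b
  · rfl
  · exact absurd hab.symm (hy _)
  · exact absurd hab (hy _)
  · exact congrArg _ (hf hab)

theorem exists_onePoint_reduction_of_not_isOpen {X : Type*} [TopologicalSpace X] [T1Space X]
    [FrechetUrysohnSpace X] {E : X → X → Prop} (hE : Equivalence E) {x₀ : X}
    (hx₀ : ¬IsOpen {y | E x₀ y}) :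
    ∃ g : OnePoint ℕ → X, Injective g ∧ Continuous g ∧
      ((∀ a b, E (g a) (g b) ↔ a = b) ∨ ∀ a b, E (g a) (g b) ↔ (a = ∞ ↔ b = ∞)) := by
  set S := {y | E x₀ y}
  obtain ⟨z, hz, hzS⟩ : ∃ z ∈ closure Sᶜ, z ∉ Sᶜ :=
    Set.not_subset.mp (mt closure_subset_iff_isClosed.mp (by rwa [isClosed_compl_iff]))
  obtain ⟨u, hu, huS, huz⟩ := exists_injective_tendsto_of_mem_closure hz hzS
  obtain ⟨φ, hφ, hred⟩ := (hE.comap u).exists_injective_forall_or_forall_iff_eq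
  have hzu : ∀ n, ¬E z (u (φ n)) := fun n h => huS _ (hE.trans (not_not.mp hzS) h)
  have huz' : ∀ n, ¬E (u (φ n)) z := fun n h => hzu n (hE.symm h)
  refine ⟨fun a => a.elim z (u ∘ φ), elim_injective (hu.comp hφ) fun n h => hzu n (h ▸ hE.refl _),
    (continuous_iff_from_nat _).mpr (huz.comp hφ.nat_tendsto_atTop), ?_⟩
  simp only [onFun] at hred
  rcases hred with hred | hred
  · refine Or.inr fun a b => ?_
    cases a <;> cases b <;> simp [hE.refl, hzu, huz', hred]
  · refine Or.inl fun a b => ?_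
    cases a <;> cases b <;> simp [hE.refl, hzu, huz', hred]

namespace Kspace

noncomputable def param : C(OnePoint ℕ, ℝ) where
  toFun a := a.elim 0 fun n => (1 / 2 : ℝ) ^ n
  continuous_toFun := (continuous_iff_from_nat _).mpr
    (tendsto_pow_atTop_nhds_zero_of_lt_one (by norm_num) (by norm_num))

theorem param_eq_zero_iff (a : OnePoint ℕ) : param a = 0 ↔ a = ∞ := by
  cases a <;> simp [param]

theorem injective_param : Injective param :=
  elim_injective (pow_right_injective₀ (by norm_num) (by norm_num)) fun n =>
    (param_eq_zero_iff n).not.mpr (coe_ne_infty n)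

theorem range_param : Set.range param = Kspace := by
  ext x
  constructor
  · rintro ⟨a, rfl⟩
    cases a
    exacts [Or.inl rfl, Or.inr ⟨_, rfl⟩]
  · rintro (rfl | ⟨k, rfl⟩)
    exacts [⟨∞, rfl⟩, ⟨k, rfl⟩]

noncomputable def homeomorph : OnePoint ℕ ≃ₜ Kspace :=
  (param.continuous.isClosedEmbedding injective_param).toIsEmbedding.toHomeomorph.trans
    (Homeomorph.setCongr range_param)

theorem coe_homeomorph_eq_zero_iff (a : OnePoint ℕ) : (homeomorph a : ℝ) = 0 ↔ a = ∞ :=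
  param_eq_zero_iff a

end Kspace

theorem open_classes_dichotomy {X : Type*} [TopologicalSpace X]
    [TopologicalSpace.MetrizableSpace X] (E : X → X → Prop) (hE : Equivalence E) :
    Xor' (∀ x : X, IsOpen {y : X | E x y})
      (∃ f : Kspace → X, Function.Injective f ∧ Continuous f ∧
        ((∀ x y : Kspace, E (f x) (f y) ↔ x = y) ∨
         (∀ x y : Kspace, E (f x) (f y) ↔
            (((x : ℝ) = 0 ∧ (y : ℝ) = 0) ∨ ((x : ℝ) ≠ 0 ∧ (y : ℝ) ≠ 0))))) := by
  let h := Kspace.homeomorph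
  have hzero : ∀ a, (h a : ℝ) = 0 ↔ a = ∞ := Kspace.coe_homeomorph_eq_zero_iff
  refine xor_iff_not_iff'.mpr ⟨fun hnot => ?_, ?_⟩
  · push Not at hnot
    obtain ⟨x₀, hx₀⟩ := hnot
    obtain ⟨g, hg_inj, hg_cont, hred⟩ := exists_onePoint_reduction_of_not_isOpen hE hx₀
    have hzero' (x : Kspace) : (x : ℝ) = 0 ↔ h.symm x = ∞ := by
      rw [← hzero, h.apply_symm_apply]
    refine ⟨g ∘ h.symm, hg_inj.comp h.symm.injective, hg_cont.comp h.symm.continuous, ?_⟩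
    rcases hred with hred | hred
    · exact Or.inl fun x y => (hred _ _).trans h.symm.injective.eq_iff
    · refine Or.inr fun x y => ?_
      rw [comp_apply, comp_apply, hred, ← hzero' x, ← hzero' y]
      tauto
  · rintro ⟨f, -, hf, hred⟩ hopen
    have hsep (n : ℕ) : ¬E (f (h ∞)) (f (h n)) := by
      rcases hred with hred | hred <;>
        simp [hred, h.injective.eq_iff, hzero]
    obtain ⟨n, hn⟩ := (((continuous_iff_from_nat _).mp (hf.comp h.continuous)).eventually
      ((hopen _).mem_nhds (hE.refl _))).exists
    exact hsep n hn
end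

section
/- Let X be a metrizable topological space and E an equivalence relation on X. Then exactly one of the following holds: (a) every equivalence class of E is closed; (b) there is an injective continuous map f : 𝕂 → X such that for all x, y ∈ 𝕂, f(x) E f(y) ⇔ ((x ≠ 0 and y ≠ 0) or x = y). -/
lemma half_pow_mem (k : ℕ) : ((1/2:ℝ)^k) ∈ Kspace := Or.inr ⟨k, rfl⟩

lemma half_pow_pos (k : ℕ) : (0:ℝ) < (1/2:ℝ)^k := by positivity

lemma half_pow_anti : StrictAnti (fun k : ℕ => (1/2:ℝ)^k) := by
  apply strictAnti_nat_of_succ_lt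
  intro k
  have h := half_pow_pos k
  simp only [pow_succ]
  nlinarith

lemma half_pow_sep {j k : ℕ} (h : j ≠ k) :
    (1/2:ℝ)^(k+1) ≤ |(1/2:ℝ)^j - (1/2:ℝ)^k| := by
  rcases lt_or_gt_of_ne h with hlt | hgt
  · -- j < k : (1/2)^j ≥ 2 * (1/2)^k
    have h1 : (1/2:ℝ)^k ≤ (1/2:ℝ)^(j+1) :=
      pow_le_pow_of_le_one (by norm_num) (by norm_num) hlt
    have h2 : (1/2:ℝ)^(k+1) ≤ (1/2:ℝ)^(j+1) :=
      pow_le_pow_of_le_one (by norm_num) (by norm_num) (by omega)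
    have h3 : (1/2:ℝ)^(j+1) = (1/2:ℝ)^j * (1/2) := pow_succ _ _
    rw [abs_of_nonneg (by nlinarith [half_pow_pos j, half_pow_pos k])]
    nlinarith [half_pow_pos j, half_pow_pos k]
  · -- k < j : (1/2)^j ≤ (1/2)^(k+1)
    have h1 : (1/2:ℝ)^j ≤ (1/2:ℝ)^(k+1) :=
      pow_le_pow_of_le_one (by norm_num) (by norm_num) hgt
    have h3 : (1/2:ℝ)^(k+1) = (1/2:ℝ)^k * (1/2) := pow_succ _ _
    rw [abs_of_nonpos (by nlinarith [half_pow_pos j, half_pow_pos k])]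
    nlinarith [half_pow_pos j, half_pow_pos k]

theorem closed_classes_dichotomy {X : Type*} [TopologicalSpace X]
    [TopologicalSpace.MetrizableSpace X] (E : X → X → Prop) (hE : Equivalence E) :
    Xor' (∀ x : X, IsClosed {y : X | E x y})
      (∃ f : Kspace → X, Function.Injective f ∧ Continuous f ∧
        ∀ x y : Kspace, E (f x) (f y) ↔
          (((x : ℝ) ≠ 0 ∧ (y : ℝ) ≠ 0) ∨ x = y)) := by
  letI : MetricSpace X := TopologicalSpace.metrizableSpaceMetric X
  by_cases ha : ∀ x : X, IsClosed {y : X | E x y}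
  · -- (a) holds; show ¬(b)
    left
    refine ⟨ha, ?_⟩
    rintro ⟨f, hinj, hcont, hEf⟩
    have h1 : (1:ℝ) ∈ Kspace := Or.inr ⟨0, by norm_num⟩
    have h0 : (0:ℝ) ∈ Kspace := Or.inl rfl
    set p1 : Kspace := ⟨1, h1⟩ with hp1
    set p0 : Kspace := ⟨0, h0⟩ with hp0
    have hseq : Filter.Tendsto (fun k : ℕ => (⟨(1/2)^k, half_pow_mem k⟩ : Kspace))
        Filter.atTop (nhds p0) := by
      rw [tendsto_subtype_rng]
      exact tendsto_pow_atTop_nhds_zero_of_lt_one (by norm_num) (by norm_num)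
    have hlim : Filter.Tendsto (fun k : ℕ => f ⟨(1/2)^k, half_pow_mem k⟩)
        Filter.atTop (nhds (f p0)) := (hcont.tendsto p0).comp hseq
    have hmemC : ∀ k : ℕ, f ⟨(1/2)^k, half_pow_mem k⟩ ∈ {y | E (f p1) y} := by
      intro k
      exact (hEf p1 ⟨(1/2)^k, half_pow_mem k⟩).mpr
        (Or.inl ⟨by norm_num, ne_of_gt (half_pow_pos k)⟩)
    have hmem0 : f p0 ∈ {y | E (f p1) y} :=
      (ha (f p1)).mem_of_tendsto hlim (Filter.Eventually.of_forall hmemC)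
    rcases (hEf p1 p0).mp hmem0 with ⟨_, h⟩ | h
    · exact h rfl
    · exact one_ne_zero (congrArg Subtype.val h : (1:ℝ) = 0)
  · -- ¬(a); construct f
    right
    refine ⟨?_, ha⟩
    push_neg at ha
    obtain ⟨x, hx⟩ := ha
    set S := {y : X | E x y} with hSdef
    obtain ⟨z, hzc, hzS⟩ := Set.not_subset.mp
      (fun h => hx (isClosed_of_closure_subset h))
    -- choice function
    have key : ∀ ε : ℝ, 0 < ε → ∃ y : {y : X // y ∈ S}, dist z y.val < ε := by
      intro ε hε
      obtain ⟨y, hyS, hyd⟩ := Metric.mem_closure_iff.mp hzc ε hε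
      exact ⟨⟨y, hyS⟩, hyd⟩
    choose F hF using key
    have hpos : ∀ y : {y : X // y ∈ S}, 0 < dist z y.val := by
      intro y
      rw [dist_pos]
      intro h
      exact hzS (h ▸ y.2)
    -- the sequence
    let D : ℕ → {y : X // y ∈ S} := fun k => Nat.rec (F 1 one_pos)
      (fun k prev => F (min (dist z prev.val) ((1/2)^(k+1)))
        (lt_min (hpos prev) (half_pow_pos (k+1)))) k
    have hD0 : dist z (D 0).val < 1 := by
      show dist z (F 1 one_pos).val < 1
      exact hF 1 one_pos
    have hDsucc : ∀ k, dist z (D (k+1)).val < min (dist z (D k).val) ((1/2)^(k+1)) := by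
      intro k
      show dist z (F (min (dist z (D k).val) ((1/2)^(k+1)))
        (lt_min (hpos (D k)) (half_pow_pos (k+1)))).val < _
      exact hF _ _
    have hDlt : ∀ k, dist z (D k).val < (1/2)^k := by
      intro k
      cases k with
      | zero => simpa using hD0
      | succ k => exact lt_of_lt_of_le (hDsucc k) (min_le_right _ _)
    have hDanti : StrictAnti (fun k => dist z (D k).val) := by
      apply strictAnti_nat_of_succ_lt
      intro k
      exact lt_of_lt_of_le (hDsucc k) (min_le_left _ _)
    have hDne : ∀ k, z ≠ (D k).val := fun k => fun h => (hpos (D k)).ne' (by rw [← h, dist_self])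
    have hDinj : ∀ j k, (D j).val = (D k).val → j = k := by
      intro j k h
      exact hDanti.injective (by simp only [h])
    -- index of a nonzero element
    have exk : ∀ p : Kspace, (p:ℝ) ≠ 0 → ∃ k : ℕ, (p:ℝ) = (1/2:ℝ)^k := by
      intro p hp
      rcases p.2 with h | ⟨k, hk⟩
      · exact absurd h hp
      · exact ⟨k, hk⟩
    -- the map
    let f : Kspace → X := fun p =>
      if h : (p:ℝ) = 0 then z else (D (exk p h).choose).val
    have hval : ∀ (p : Kspace) (h : (p:ℝ) ≠ 0), (p:ℝ) = (1/2:ℝ)^(exk p h).choose :=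
      fun p h => (exk p h).choose_spec
    have hf0 : ∀ (p : Kspace) (h : (p:ℝ) = 0), f p = z := by
      intro p h; simp only [f, dif_pos h]
    have hfn : ∀ (p : Kspace) (h : (p:ℝ) ≠ 0), f p = (D (exk p h).choose).val := by
      intro p h; simp only [f, dif_neg h]
    have hidx : ∀ (p : Kspace) (h : (p:ℝ) ≠ 0) (k : ℕ), (p:ℝ) = (1/2:ℝ)^k →
        (exk p h).choose = k := by
      intro p h k hk
      exact half_pow_anti.injective (((hval p h).symm.trans hk))
    refine ⟨f, ?_, ?_, ?_⟩
    · -- injective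
      intro p q hpq
      by_cases hp : (p:ℝ) = 0 <;> by_cases hq : (q:ℝ) = 0
      · exact Subtype.ext (hp.trans hq.symm)
      · rw [hf0 p hp, hfn q hq] at hpq
        exact absurd hpq (hDne _)
      · rw [hfn p hp, hf0 q hq] at hpq
        exact absurd hpq.symm (hDne _)
      · rw [hfn p hp, hfn q hq] at hpq
        have := hDinj _ _ hpq
        apply Subtype.ext
        rw [hval p hp, hval q hq, this]
    · -- continuous
      rw [Metric.continuous_iff]
      intro p ε hε
      by_cases hp : (p:ℝ) = 0
      · -- continuity at 0
        obtain ⟨K, hK⟩ := exists_pow_lt_of_lt_one hε (by norm_num : (1/2:ℝ) < 1)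
        refine ⟨(1/2:ℝ)^K, half_pow_pos K, ?_⟩
        intro q hq
        rw [hf0 p hp]
        by_cases hqz : (q:ℝ) = 0
        · rw [hf0 q hqz, dist_self]; exact hε
        · rw [hfn q hqz]
          set k := (exk q hqz).choose with hk
          have hqv : (q:ℝ) = (1/2:ℝ)^k := hval q hqz
          have hdq : dist q p = (1/2:ℝ)^k := by
            rw [Subtype.dist_eq, hp, hqv, Real.dist_eq, sub_zero,
              abs_of_pos (half_pow_pos k)]
          rw [hdq] at hq
          calc dist (D k).val z = dist z (D k).val := dist_comm _ _
            _ < (1/2:ℝ)^k := hDlt k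
            _ < (1/2:ℝ)^K := hq
            _ < ε := hK
      · -- p is isolated
        set k := (exk p hp).choose with hk
        have hpv : (p:ℝ) = (1/2:ℝ)^k := hval p hp
        refine ⟨(1/2:ℝ)^(k+1), half_pow_pos (k+1), ?_⟩
        intro q hq
        have hqp : q = p := by
          by_cases hqz : (q:ℝ) = 0
          · exfalso
            rw [Subtype.dist_eq, hqz, hpv, Real.dist_eq, zero_sub, abs_neg,
              abs_of_pos (half_pow_pos k)] at hq
            have : (1/2:ℝ)^(k+1) ≤ (1/2:ℝ)^k :=
              pow_le_pow_of_le_one (by norm_num) (by norm_num) (by omega)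
            linarith
          · set j := (exk q hqz).choose with hj
            have hqv : (q:ℝ) = (1/2:ℝ)^j := hval q hqz
            by_cases hjk : j = k
            · exact Subtype.ext (by rw [hqv, hpv, hjk])
            · exfalso
              rw [Subtype.dist_eq, hqv, hpv, Real.dist_eq] at hq
              exact absurd hq (not_lt.mpr (half_pow_sep hjk))
        rw [hqp, dist_self]
        exact hε
    · -- the E characterization
      intro p q
      by_cases hp : (p:ℝ) = 0 <;> by_cases hq : (q:ℝ) = 0
      · rw [hf0 p hp, hf0 q hq]
        constructor
        · intro _; exact Or.inr (Subtype.ext (hp.trans hq.symm))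
        · intro _; exact hE.refl z
      · rw [hf0 p hp, hfn q hq]
        constructor
        · intro h
          exfalso
          have hDq : E x (D (exk q hq).choose).val := (D _).2
          exact hzS (hE.trans hDq (hE.symm h))
        · rintro (⟨h, _⟩ | h)
          · exact absurd hp h
          · exact absurd (by rw [← h]; exact hp) hq
      · rw [hfn p hp, hf0 q hq]
        constructor
        · intro h
          exfalso
          have hDp : E x (D (exk p hp).choose).val := (D _).2
          exact hzS (hE.trans hDp h)
        · rintro (⟨_, h⟩ | h)
          · exact absurd hq h
          · exact absurd (by rw [h]; exact hq) hp
      · rw [hfn p hp, hfn q hq]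
        constructor
        · intro _; exact Or.inl ⟨hp, hq⟩
        · intro _
          exact hE.trans (hE.symm ((D (exk p hp).choose).2)) ((D (exk q hq).choose).2)
end

section
/- Let X be a metrizable topological space and E an equivalence relation on X which is not a closed subset of X × X. Then there is an injective continuous map f from either 𝕂 or 2 × 𝕂 into X which is a reduction witnessing one of the following: (i) f : 𝕂 → X with f(x) E f(y) ⇔ ((x ≠ 0 and y ≠ 0) or x = y); or (ii) f : 2 × 𝕂 → X with f(ε,x) E f(η,y) ⇔ ((ε,x) = (η,y) or (x = y and x ≠ 0)). -/
open Filter Topology Function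

namespace ENat

variable {X : Type*}

def seqWithLimit (u : ℕ → X) (c : X) : ℕ∞ → X := ENat.recTopCoe c u

@[simp] theorem seqWithLimit_top (u : ℕ → X) (c : X) : seqWithLimit u c ⊤ = c := rfl

@[simp] theorem seqWithLimit_natCast (u : ℕ → X) (c : X) (n : ℕ) : seqWithLimit u c n = u n := rfl

theorem continuous_seqWithLimit [TopologicalSpace X] {u : ℕ → X} {c : X}
    (hu : Tendsto u atTop (𝓝 c)) : Continuous (seqWithLimit u c) := by
  refine continuous_iff_continuousAt.2 fun n => ?_
  induction n using ENat.recTopCoe with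
  | top =>
    intro V hV
    obtain ⟨N, hN⟩ := eventually_atTop.1 (hu hV)
    refine mem_map.2 (mem_of_superset (Ioi_mem_nhds (natCast_lt_top N)) fun m hm => ?_)
    induction m using ENat.recTopCoe with
    | top => exact Set.mem_preimage.2 (mem_of_mem_nhds hV)
    | coe m => exact hN m (le_of_lt (by simpa using hm))
  | coe n => simpa [ContinuousAt] using tendsto_pure_nhds (seqWithLimit u c) n

end ENat

open ENat

noncomputable def toKspace (n : ℕ∞) : Kspace :=
  ⟨seqWithLimit (fun k => (1 / 2 : ℝ) ^ k) 0 n, by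
    induction n using ENat.recTopCoe with
    | top => exact Set.mem_insert _ _
    | coe k => exact Set.mem_insert_of_mem _ ⟨k, rfl⟩⟩

@[simp] theorem coe_toKspace_eq_zero {n : ℕ∞} : (toKspace n : ℝ) = 0 ↔ n = ⊤ := by
  induction n using ENat.recTopCoe <;> simp [toKspace]

theorem toKspace_bijective : Bijective toKspace := by
  refine ⟨fun m n h => ?_, fun ⟨x, hx⟩ => ?_⟩
  · induction m using ENat.recTopCoe <;> induction n using ENat.recTopCoe <;>
      simp_all [toKspace, Subtype.ext_iff, eq_comm (a := (0 : ℝ))]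
  · rcases hx with rfl | ⟨k, rfl⟩
    exacts [⟨⊤, rfl⟩, ⟨k, rfl⟩]

theorem continuous_toKspace : Continuous toKspace :=
  (continuous_seqWithLimit <|
    tendsto_pow_atTop_nhds_zero_of_lt_one (by norm_num) (by norm_num)).subtype_mk _

noncomputable def kspaceHomeomorph : ℕ∞ ≃ₜ Kspace :=
  continuous_toKspace.homeoOfEquivCompactToT2 (f := Equiv.ofBijective _ toKspace_bijective)

@[simp] theorem kspaceHomeomorph_symm_eq_top {x : Kspace} :
    kspaceHomeomorph.symm x = ⊤ ↔ (x : ℝ) = 0 := by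
  conv_rhs => rw [← kspaceHomeomorph.apply_symm_apply x]
  exact coe_toKspace_eq_zero.symm

theorem Nat.exists_strictMono_pairwise_of_frequently {P : ℕ → Prop} {R : ℕ → ℕ → Prop}
    (hR_symm : ∀ m n, R m n → R n m) (hP : ∃ᶠ n in atTop, P n)
    (hR : ∀ m, P m → ∀ᶠ n in atTop, R m n) :
    ∃ φ : ℕ → ℕ, StrictMono φ ∧ (∀ n, P (φ n)) ∧ Pairwise (R on φ) := by
  obtain ⟨φ, hPφ, hφ⟩ := exists_seq_of_forall_finset_exists P (fun m n => m < n ∧ R m n)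
    fun s hs => ((eventually_all_finset s).2 fun m hm =>
      (eventually_gt_atTop m).and (hR m (hs m hm))).and_frequently hP |>.exists.imp
        fun n hn => ⟨hn.2, hn.1⟩
  refine ⟨φ, fun m n h => (hφ m n h).1, hPφ, fun m n hmn => ?_⟩
  rcases hmn.lt_or_gt with h | h
  exacts [(hφ m n h).2, hR_symm _ _ (hφ n m h).2]

section Reductions

variable {X Q : Type*} [TopologicalSpace X] (π : X → Q)

theorem exists_enat_reduction_of_injective {u : ℕ → X} {c : X} {q : Q}
    (hu : Tendsto u atTop (𝓝 c)) (hinj : Injective u) (huq : ∀ n, π (u n) = q) (hc : π c ≠ q) :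
    ∃ F : ℕ∞ → X, Injective F ∧ Continuous F ∧
      ∀ m n, π (F m) = π (F n) ↔ (m ≠ ⊤ ∧ n ≠ ⊤) ∨ m = n := by
  have huc : ∀ n, u n ≠ c := fun n h => hc (h ▸ huq n)
  refine ⟨seqWithLimit u c, fun m n h => ?_, continuous_seqWithLimit hu, fun m n => ?_⟩
  · induction m using ENat.recTopCoe <;> induction n using ENat.recTopCoe <;>
      simp_all [hinj.eq_iff]
  · induction m using ENat.recTopCoe <;> induction n using ENat.recTopCoe <;>
      simp [huq, hc, hc.symm]

theorem exists_bool_enat_reduction {x y : ℕ → X} {a b : X}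
    (hx : Tendsto x atTop (𝓝 a)) (hy : Tendsto y atTop (𝓝 b)) (hxy : ∀ n, x n ≠ y n)
    (hπxy : ∀ n, π (x n) = π (y n)) (hinj : Injective (π ∘ x))
    (ha : ∀ n, π a ≠ π (x n)) (hb : ∀ n, π b ≠ π (x n)) (hab : π a ≠ π b) :
    ∃ F : Bool × ℕ∞ → X, Injective F ∧ Continuous F ∧
      ∀ p q, π (F p) = π (F q) ↔ p = q ∨ (p.2 = q.2 ∧ p.2 ≠ ⊤) := by
  set F : Bool × ℕ∞ → X := fun p => seqWithLimit (cond p.1 y x) (cond p.1 b a) p.2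
  have hseq (ε : Bool) (n : ℕ) : π (cond ε y x n) = π (x n) := by
    cases ε
    exacts [rfl, (hπxy n).symm]
  have hcls (m n : ℕ) : π (x m) = π (x n) ↔ m = n := hinj.eq_iff
  have hlim (ε : Bool) (n : ℕ) : π (cond ε b a) ≠ π (x n) := by
    cases ε
    exacts [ha n, hb n]
  have hlim_inj (ε η : Bool) : π (cond ε b a) = π (cond η b a) ↔ ε = η := by
    cases ε <;> cases η <;> simp [hab, hab.symm]
  have hrel : ∀ p q, π (F p) = π (F q) ↔ p = q ∨ (p.2 = q.2 ∧ p.2 ≠ ⊤) := by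
    rintro ⟨ε, m⟩ ⟨η, n⟩
    induction m using ENat.recTopCoe <;> induction n using ENat.recTopCoe <;>
      simp [F, hseq, hlim, (hlim _ _).symm, hlim_inj, hcls, or_iff_right_of_imp And.right]
  refine ⟨F, fun p q h => ?_, ?_, hrel⟩
  · rcases (hrel p q).1 (congrArg π h) with hpq | ⟨h2, hne⟩
    · exact hpq
    obtain ⟨ε, m⟩ := p
    obtain ⟨η, n⟩ := q
    lift m to ℕ using hne
    obtain rfl : (m : ℕ∞) = n := h2
    cases ε <;> cases η
    exacts [rfl, absurd h (hxy m), absurd h.symm (hxy m), rfl]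
  · refine continuous_prod_of_discrete_left.2 fun ε => ?_
    cases ε
    exacts [continuous_seqWithLimit hx, continuous_seqWithLimit hy]

theorem exists_enat_reduction_of_frequently [T1Space X] {u : ℕ → X} {c : X} {q : Q}
    (hu : Tendsto u atTop (𝓝 c)) (hq : ∃ᶠ n in atTop, π (u n) = q) (hc : π c ≠ q) :
    ∃ F : ℕ∞ → X, Injective F ∧ Continuous F ∧
      ∀ m n, π (F m) = π (F n) ↔ (m ≠ ⊤ ∧ n ≠ ⊤) ∨ m = n := by
  obtain ⟨φ, hφ, huq, hinj⟩ := Nat.exists_strictMono_pairwise_of_frequently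
    (R := fun m n => u m ≠ u n) (fun _ _ => Ne.symm) hq
    fun m hm => (hu.eventually_ne fun h => hc (h ▸ hm)).mono fun _ => Ne.symm
  exact exists_enat_reduction_of_injective π (hu.comp hφ.tendsto_atTop)
    (injective_iff_pairwise_ne.2 hinj) huq hc

theorem exists_enat_reduction_of_not_isClosed [T2Space X] [FirstCountableTopology X]
    (h : ¬ IsClosed {p : X × X | π p.1 = π p.2}) :
    (∃ F : ℕ∞ → X, Injective F ∧ Continuous F ∧
      ∀ m n, π (F m) = π (F n) ↔ (m ≠ ⊤ ∧ n ≠ ⊤) ∨ m = n) ∨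
    (∃ F : Bool × ℕ∞ → X, Injective F ∧ Continuous F ∧
      ∀ p q, π (F p) = π (F q) ↔ p = q ∨ (p.2 = q.2 ∧ p.2 ≠ ⊤)) := by
  obtain ⟨⟨a, b⟩, hcl, hab : π a ≠ π b⟩ := Set.not_subset.1 (mt isClosed_of_closure_subset h)
  obtain ⟨z, hzS : ∀ n, π (z n).1 = π (z n).2, hz⟩ := mem_closure_iff_seq_limit.1 hcl
  by_cases hA : ∃ q ≠ π a, ∃ᶠ n in atTop, π (z n).1 = q
  · obtain ⟨q, hq, hfreq⟩ := hA
    exact .inl (exists_enat_reduction_of_frequently π hz.fst_nhds hfreq hq.symm)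
  by_cases hB : ∃ q ≠ π b, ∃ᶠ n in atTop, π (z n).2 = q
  · obtain ⟨q, hq, hfreq⟩ := hB
    exact .inl (exists_enat_reduction_of_frequently π hz.snd_nhds hfreq hq.symm)
  push Not at hA hB
  have hgood : ∀ᶠ n in atTop, π a ≠ π (z n).1 ∧ π b ≠ π (z n).1 ∧ (z n).1 ≠ (z n).2 :=
    ((hB (π a) hab).mono fun n hn => ((hzS n).trans_ne hn).symm).and <|
      ((hA (π b) hab.symm).mono fun n hn => Ne.symm hn).and <|
        hz.eventually (isClosed_diagonal.isOpen_compl.mem_nhds fun h => hab (congrArg π h))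
  obtain ⟨φ, hφ, hgoodφ, hpair⟩ := Nat.exists_strictMono_pairwise_of_frequently
    (R := fun m n => π (z m).1 ≠ π (z n).1) (fun _ _ => Ne.symm) hgood.frequently
    fun m hm => (hA _ hm.1.symm).mono fun n hn => Ne.symm hn
  exact .inr (exists_bool_enat_reduction π (hz.fst_nhds.comp hφ.tendsto_atTop)
    (hz.snd_nhds.comp hφ.tendsto_atTop) (fun n => (hgoodφ n).2.2) (fun n => hzS (φ n))
    (injective_iff_pairwise_ne.2 hpair) (fun n => (hgoodφ n).1) (fun n => (hgoodφ n).2.1) hab)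

end Reductions

theorem nonclosed_equiv_dichotomy {X : Type*} [TopologicalSpace X]
    [TopologicalSpace.MetrizableSpace X] (E : X → X → Prop) (hE : Equivalence E)
    (hnc : ¬ IsClosed {p : X × X | E p.1 p.2}) :
    (∃ f : Kspace → X, Function.Injective f ∧ Continuous f ∧
        ∀ x y : Kspace, E (f x) (f y) ↔
          (((x : ℝ) ≠ 0 ∧ (y : ℝ) ≠ 0) ∨ x = y)) ∨
    (∃ f : Bool × Kspace → X, Function.Injective f ∧ Continuous f ∧
        ∀ p q : Bool × Kspace, E (f p) (f q) ↔
          (p = q ∨ (p.2 = q.2 ∧ (p.2 : ℝ) ≠ 0))) := by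
  let s : Setoid X := ⟨E, hE⟩
  have hE_iff (x y : X) : E x y ↔ Quotient.mk s x = Quotient.mk s y := (Quotient.eq (r := s)).symm
  simp only [hE_iff] at hnc ⊢
  rcases exists_enat_reduction_of_not_isClosed _ hnc with
    ⟨F, hinj, hF, hrel⟩ | ⟨F, hinj, hF, hrel⟩
  · refine .inl ⟨F ∘ kspaceHomeomorph.symm, hinj.comp kspaceHomeomorph.symm.injective,
      hF.comp kspaceHomeomorph.symm.continuous, fun x y => ?_⟩
    simp [hrel, kspaceHomeomorph.symm.injective.eq_iff]
  · let e := (Homeomorph.refl Bool).prodCongr kspaceHomeomorph.symm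
    refine .inr ⟨F ∘ e, hinj.comp e.injective, hF.comp e.continuous, fun p q => ?_⟩
    simp [e, hrel, kspaceHomeomorph.symm.injective.eq_iff, Prod.ext_iff]
end

section
/- Let F be a symmetric closed relation on 2^ω all of whose vertical sections F_α = {β | (α,β) ∈ F} are nowhere dense. Then there is an injective continuous map f : 2^ω → 2^ω such that f⁻¹(P_f) = P_f (where P_f is the set of eventually-zero sequences) and (f(α), f(β)) ∉ F whenever α ≠ β. -/
/-- The set of eventually-zero binary sequences. -/
def Pfin : Set (ℕ → Bool) := {α | ∃ N : ℕ, ∀ n ≥ N, α n = false}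

open PiNat Filter Function Set Topology

/-!
A Cantor scheme of finite binary strings. Below a string `u`, the section of `F` at `u0^∞` is
nowhere dense, so some cylinder `[w]` with `w` extending `u1` misses it; as `F` is closed, the box
`[u0^k] × [w]` misses `F` for `k` large. The children of `u` are `u0^k` and `w`. Two distinct
sequences first split at some node, so their images lie in such a box (in one order or the other,
whence symmetry of `F`). A digit `0` appends only zeros and a digit `1` appends a word starting
with `1`, so eventually-zero sequences are exactly those with eventually-zero images.
-/

theorem eventually_cylinder_subset {E : ℕ → Type*} [∀ n, TopologicalSpace (E n)]
    [∀ n, DiscreteTopology (E n)] {x : ∀ n, E n} {U : Set (∀ n, E n)} (hU : U ∈ 𝓝 x) :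
    ∀ᶠ n in atTop, cylinder x n ⊆ U := by
  obtain ⟨_, ⟨y, n, rfl⟩, hx, hsub⟩ := (isTopologicalBasis_cylinders E).mem_nhds_iff.1 hU
  filter_upwards [eventually_ge_atTop n] with m hm
  exact (cylinder_anti x hm).trans (mem_cylinder_iff_eq.1 hx ▸ hsub)

theorem eventually_cylinder_prod_subset {E : ℕ → Type*} [∀ n, TopologicalSpace (E n)]
    [∀ n, DiscreteTopology (E n)] {x y : ∀ n, E n} {s : Set ((∀ n, E n) × (∀ n, E n))}
    (hs : s ∈ 𝓝 (x, y)) : ∀ᶠ n in atTop, cylinder x n ×ˢ cylinder y n ⊆ s := by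
  obtain ⟨u, hu, v, hv, huv⟩ := mem_nhds_prod_iff.1 hs
  filter_upwards [eventually_cylinder_subset hu, eventually_cylinder_subset hv] with n hxu hyv
  exact (prod_mono hxu hyv).trans huv

theorem of_ne_of_split {P : (ℕ → Bool) → (ℕ → Bool) → Prop} (hP : ∀ α β, P α β → P β α)
    (hsplit : ∀ α β n, (∀ i < n, α i = β i) → α n = false → β n = true → P α β)
    {α β : ℕ → Bool} (hne : α ≠ β) : P α β := by
  have hagree : ∀ i < firstDiff α β, α i = β i := fun i hi => apply_eq_of_lt_firstDiff hi
  have hdiff := apply_firstDiff_ne hne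
  cases hα : α (firstDiff α β) <;> cases hβ : β (firstDiff α β) <;> rw [hα, hβ] at hdiff
  · exact absurd rfl hdiff
  · exact hsplit α β _ hagree hα hβ
  · exact hP β α (hsplit β α _ (fun i hi => (hagree i hi).symm) hβ hα)
  · exact absurd rfl hdiff

theorem exists_split_of_isNowhereDense {F : Set ((ℕ → Bool) × (ℕ → Bool))} (hF : IsClosed F)
    {x : ℕ → Bool} (hx : IsNowhereDense {y | (x, y) ∈ F}) (n : ℕ) :
    ∃ (y : ℕ → Bool) (m : ℕ), n < m ∧ y ∈ cylinder x n ∧ y n = true ∧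
      (∀ i ≥ m, y i = false) ∧ cylinder x m ×ˢ cylinder y m ⊆ Fᶜ := by
  obtain ⟨y₀, hy₀, hy₀F⟩ := (interior_eq_empty_iff_dense_compl.1 hx).inter_open_nonempty
    (cylinder (update x n true) (n + 1)) (isOpen_cylinder _ _ _) ⟨_, self_mem_cylinder _ _⟩
  have hy₀x : y₀ ∈ cylinder x n := fun i hi => by
    simpa [hi.ne] using hy₀ i (Nat.lt_succ_of_lt hi)
  have hy₀n : y₀ n = true := by simpa using hy₀ n n.lt_succ_self
  have hbox : Fᶜ ∈ 𝓝 (x, y₀) :=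
    hF.isOpen_compl.mem_nhds fun h => hy₀F (subset_closure h)
  obtain ⟨m, hnm, hm⟩ := ((eventually_gt_atTop n).and (eventually_cylinder_prod_subset hbox)).exists
  -- cut `y₀` off after `m`; the box only sees its first `m` digits
  set y : ℕ → Bool := fun i => decide (i < m) && y₀ i
  have hyy₀ : y ∈ cylinder y₀ m := fun i hi => by simp [y, hi]
  refine ⟨y, m, hnm, ?_, by simpa [y, hnm] using hy₀n, fun i hi => by simp [y, hi.not_gt], ?_⟩
  · exact fun i hi => (hyy₀ i (hi.trans hnm)).trans (hy₀x i hi)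
  · rwa [mem_cylinder_iff_eq.1 hyy₀]

/-- A node of the scheme is a pair `(x, n)` standing for the string `x 0, …, x (n - 1)`, with `x`
vanishing from `n` on. Its children are `(x, len x n)`, the string padded with zeros, and
`(next x n, len x n)`, the string followed by a word that starts with `1`. -/
structure SplitRule where
  next : (ℕ → Bool) → ℕ → ℕ → Bool
  len : (ℕ → Bool) → ℕ → ℕ
  lt_len (x : ℕ → Bool) (n : ℕ) : n < len x n
  next_mem_cylinder (x : ℕ → Bool) (n : ℕ) : next x n ∈ cylinder x n
  next_apply_self (x : ℕ → Bool) (n : ℕ) : next x n n = true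
  next_apply_of_le (x : ℕ → Bool) (n : ℕ) {i : ℕ} : len x n ≤ i → next x n i = false

namespace SplitRule

variable (S : SplitRule) {α β : ℕ → Bool} {m n : ℕ}

def Avoids (F : Set ((ℕ → Bool) × (ℕ → Bool))) : Prop :=
  ∀ x n, cylinder x (S.len x n) ×ˢ cylinder (S.next x n) (S.len x n) ⊆ Fᶜ

def step (p : (ℕ → Bool) × ℕ) (b : Bool) : (ℕ → Bool) × ℕ :=
  (if b then S.next p.1 p.2 else p.1, S.len p.1 p.2)

def node (α : ℕ → Bool) : ℕ → (ℕ → Bool) × ℕ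
  | 0 => (fun _ => false, 0)
  | n + 1 => S.step (node α n) (α n)

def embed (α : ℕ → Bool) : ℕ → Bool := fun i => (S.node α (i + 1)).1 i

theorem node_succ (α : ℕ → Bool) (n : ℕ) : S.node α (n + 1) = S.step (S.node α n) (α n) := rfl

theorem node_snd_succ (α : ℕ → Bool) (n : ℕ) :
    (S.node α (n + 1)).2 = S.len (S.node α n).1 (S.node α n).2 := rfl

theorem node_fst_succ_of_false (h : α n = false) : (S.node α (n + 1)).1 = (S.node α n).1 := by
  simp [node_succ, step, h]

theorem node_fst_succ_of_true (h : α n = true) :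
    (S.node α (n + 1)).1 = S.next (S.node α n).1 (S.node α n).2 := by
  simp [node_succ, step, h]

theorem node_snd_lt_succ (α : ℕ → Bool) (n : ℕ) : (S.node α n).2 < (S.node α (n + 1)).2 :=
  S.lt_len _ _

theorem node_snd_strictMono (α : ℕ → Bool) : StrictMono fun n => (S.node α n).2 :=
  strictMono_nat_of_lt_succ (S.node_snd_lt_succ α)

theorem le_node_snd (α : ℕ → Bool) (n : ℕ) : n ≤ (S.node α n).2 :=
  (S.node_snd_strictMono α).le_apply

theorem node_fst_apply_of_le (α : ℕ → Bool) (n : ℕ) {i : ℕ} (hi : (S.node α n).2 ≤ i) :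
    (S.node α n).1 i = false := by
  induction n with
  | zero => rfl
  | succ n ih =>
    cases h : α n
    · rw [S.node_fst_succ_of_false h]
      exact ih ((S.node_snd_lt_succ α n).le.trans hi)
    · rw [S.node_fst_succ_of_true h]
      exact S.next_apply_of_le _ _ hi

theorem node_fst_succ_mem_cylinder (α : ℕ → Bool) (n : ℕ) :
    (S.node α (n + 1)).1 ∈ cylinder (S.node α n).1 (S.node α n).2 := by
  cases h : α n
  · rw [S.node_fst_succ_of_false h]
    exact self_mem_cylinder _ _
  · rw [S.node_fst_succ_of_true h]
    exact S.next_mem_cylinder _ _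

theorem node_fst_mem_cylinder (α : ℕ → Bool) (h : m ≤ n) :
    (S.node α n).1 ∈ cylinder (S.node α m).1 (S.node α m).2 := by
  induction n, h using Nat.le_induction with
  | base => exact self_mem_cylinder _ _
  | succ n hmn ih =>
    have hlen := (S.node_snd_strictMono α).monotone hmn
    exact fun i hi => (S.node_fst_succ_mem_cylinder α n i (hi.trans_le hlen)).trans (ih i hi)

theorem embed_mem_cylinder (α : ℕ → Bool) (n : ℕ) :
    S.embed α ∈ cylinder (S.node α n).1 (S.node α n).2 := by
  intro i hi
  rcases le_total n (i + 1) with h | h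
  · exact S.node_fst_mem_cylinder α h i hi
  · exact (S.node_fst_mem_cylinder α h i ((i.lt_succ_self).trans_le (S.le_node_snd α _))).symm

theorem node_congr (h : ∀ i < n, α i = β i) : S.node α n = S.node β n := by
  induction n with
  | zero => rfl
  | succ n ih =>
    rw [node_succ, node_succ, ih fun i hi => h i (Nat.lt_succ_of_lt hi), h n n.lt_succ_self]

theorem continuous_embed : Continuous S.embed :=
  continuous_pi fun i => continuous_iff_continuousAt.2 fun α => tendsto_nhds_of_eventually_eq <|
    mem_of_superset ((isOpen_cylinder _ α (i + 1)).mem_nhds (self_mem_cylinder α _))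
      fun β hβ => show S.embed β i = S.embed α i from congrArg (fun p => p.1 i) (S.node_congr hβ)

theorem embed_mem_cylinder_of_split (h : ∀ i < n, α i = β i) (hα : α n = false)
    (hβ : β n = true) :
    S.embed α ∈ cylinder (S.node α n).1 (S.len (S.node α n).1 (S.node α n).2) ∧
      S.embed β ∈ cylinder (S.next (S.node α n).1 (S.node α n).2)
        (S.len (S.node α n).1 (S.node α n).2) := by
  have hα' := S.embed_mem_cylinder α (n + 1)
  have hβ' := S.embed_mem_cylinder β (n + 1)
  rw [S.node_fst_succ_of_false hα, node_snd_succ] at hα'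
  rw [S.node_fst_succ_of_true hβ, node_snd_succ, ← S.node_congr h] at hβ'
  exact ⟨hα', hβ'⟩

theorem embed_ne_of_split (h : ∀ i < n, α i = β i) (hα : α n = false) (hβ : β n = true) :
    S.embed α ≠ S.embed β := by
  obtain ⟨hα', hβ'⟩ := S.embed_mem_cylinder_of_split h hα hβ
  set p := S.node α n
  have hp := S.lt_len p.1 p.2
  intro heq
  have h1 : S.embed α p.2 = false := (hα' p.2 hp).trans (S.node_fst_apply_of_le α n le_rfl)
  have h2 : S.embed β p.2 = true := (hβ' p.2 hp).trans (S.next_apply_self _ _)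
  rw [heq, h2] at h1
  exact Bool.noConfusion h1

theorem injective_embed : Injective S.embed := fun α β heq => by
  by_contra hne
  exact of_ne_of_split (P := fun α β => S.embed α ≠ S.embed β) (fun _ _ h => h.symm)
    (fun _ _ _ => S.embed_ne_of_split) hne heq

theorem embed_not_mem {F : Set ((ℕ → Bool) × (ℕ → Bool))} (hS : S.Avoids F)
    (hF : ∀ α β, (α, β) ∈ F → (β, α) ∈ F) (hne : α ≠ β) : (S.embed α, S.embed β) ∉ F :=
  of_ne_of_split (P := fun α β => (S.embed α, S.embed β) ∉ F) (fun _ _ h h' => h (hF _ _ h'))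
    (fun _ _ _ h hα hβ => hS _ _ (S.embed_mem_cylinder_of_split h hα hβ)) hne

theorem embed_eq_node_fst {N : ℕ} (hN : ∀ n ≥ N, α n = false) : S.embed α = (S.node α N).1 := by
  have hstable : ∀ n ≥ N, (S.node α n).1 = (S.node α N).1 := fun n hn => by
    induction n, hn using Nat.le_induction with
    | base => rfl
    | succ n hn ih => rw [S.node_fst_succ_of_false (hN n hn), ih]
  funext i
  have hi : i < (S.node α (max N (i + 1))).2 :=
    (i.lt_succ_self.trans_le (le_max_right _ _)).trans_le (S.le_node_snd α _)
  rw [S.embed_mem_cylinder α _ i hi, hstable _ (le_max_left _ _)]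

theorem embed_apply_node_snd_of_true (h : α n = true) : S.embed α (S.node α n).2 = true := by
  rw [S.embed_mem_cylinder α (n + 1) _ (S.node_snd_lt_succ α n), S.node_fst_succ_of_true h,
    S.next_apply_self]

theorem preimage_embed_pfin : S.embed ⁻¹' Pfin = Pfin := by
  ext α
  constructor
  · rintro ⟨N, hN⟩
    refine ⟨N, fun n hn => Bool.not_eq_true _ ▸ fun h => ?_⟩
    have := hN _ (hn.trans (S.le_node_snd α n))
    rw [S.embed_apply_node_snd_of_true h] at this
    exact Bool.noConfusion this
  · rintro ⟨N, hN⟩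
    rw [mem_preimage, S.embed_eq_node_fst hN]
    exact ⟨_, fun i hi => S.node_fst_apply_of_le α N hi⟩

end SplitRule

theorem exists_splitRule_avoids {F : Set ((ℕ → Bool) × (ℕ → Bool))} (hF : IsClosed F)
    (hFnwd : ∀ α, IsNowhereDense {β | (α, β) ∈ F}) : ∃ S : SplitRule, S.Avoids F := by
  choose y m hlt hmem hself hzero hbox using
    fun x => exists_split_of_isNowhereDense hF (hFnwd x)
  exact ⟨⟨y, m, hlt, hmem, hself, hzero⟩, hbox⟩

theorem avoid_closed_nwd_relation
    (F : Set ((ℕ → Bool) × (ℕ → Bool))) (hFcl : IsClosed F)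
    (hFsym : ∀ α β, (α, β) ∈ F → (β, α) ∈ F)
    (hFnwd : ∀ α, IsNowhereDense {β | (α, β) ∈ F}) :
    ∃ f : (ℕ → Bool) → (ℕ → Bool), Function.Injective f ∧ Continuous f ∧
      f ⁻¹' Pfin = Pfin ∧ ∀ α β, α ≠ β → (f α, f β) ∉ F := by
  obtain ⟨S, hS⟩ := exists_splitRule_avoids hFcl hFnwd
  exact ⟨S.embed, S.injective_embed, S.continuous_embed, S.preimage_embed_pfin,
    fun _ _ hne => S.embed_not_mem hS hFsym hne⟩
end

section
/- Let D be a subset of 2^ω contained in the set P_f of eventually-zero sequences, and suppose D is not nowhere dense (i.e., the closure of D has nonempty interior). Then there is an injective continuous map f : 2^ω → 2^ω such that f maps P_f into D and maps P_∞ := 2^ω \ P_f into P_∞. -/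
namespace IntoNwd

noncomputable section

lemma isOpen_cyl (y : ℕ → Bool) (k : ℕ) :
    IsOpen {β : ℕ → Bool | ∀ i < k, β i = y i} := by
  have h : {β : ℕ → Bool | ∀ i < k, β i = y i}
      = ⋂ i ∈ Finset.range k, (fun β : ℕ → Bool => β i) ⁻¹' {y i} := by
    ext β; simp [Finset.mem_range]
  rw [h]
  exact isOpen_biInter_finset fun i _ =>
    (isOpen_discrete _).preimage (continuous_apply i)

open Classical in
/-- A bound beyond which an eventually-zero sequence is zero. -/
def supN (d : ℕ → Bool) : ℕ := if h : d ∈ Pfin then h.choose else 0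

open Classical in
lemma supN_spec {d : ℕ → Bool} (h : d ∈ Pfin) {m : ℕ} (hm : supN d ≤ m) :
    d m = false := by
  unfold supN at hm
  rw [dif_pos h] at hm
  exact h.choose_spec m hm

variable (D : Set (ℕ → Bool)) (x : ℕ → Bool) (n₀ : ℕ)

/-- Invariant carried by nodes of the scheme. -/
def Good (p : ℕ × (ℕ → Bool)) : Prop :=
  p.2 ∈ D ∧ (∀ i < n₀, p.2 i = x i) ∧ n₀ ≤ p.1

def nGap (p : ℕ × (ℕ → Bool)) : ℕ := max (p.1 + 1) (supN p.2)

lemma nGap_gt (p : ℕ × (ℕ → Bool)) : p.1 < nGap p :=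
  lt_of_lt_of_le (Nat.lt_succ_self _) (le_max_left _ _)

variable (hcl : ∀ y : ℕ → Bool, (∀ i < n₀, y i = x i) → y ∈ closure D)

include hcl in
lemma dens (y : ℕ → Bool) (hy : ∀ i < n₀, y i = x i) (k : ℕ) :
    ∃ d ∈ D, ∀ i < k, d i = y i := by
  have hyc : y ∈ closure D := hcl y hy
  have hmem : y ∈ {β : ℕ → Bool | ∀ i < k, β i = y i} := fun i _ => rfl
  obtain ⟨d, hd1, hd2⟩ := mem_closure_iff.1 hyc _ (isOpen_cyl y k) hmem
  exact ⟨d, hd2, hd1⟩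

include hcl in
lemma exists_true (p : ℕ × (ℕ → Bool)) (hp : Good D x n₀ p) :
    ∃ d', d' ∈ D ∧ (∀ i < nGap p, d' i = p.2 i) ∧ d' (nGap p) = true := by
  set y : ℕ → Bool := fun i => if i < nGap p then p.2 i else decide (i = nGap p)
    with hy_def
  have hy : ∀ i < n₀, y i = x i := by
    intro i hi
    have h1 : i < nGap p := lt_of_lt_of_le hi (le_of_lt (lt_of_le_of_lt hp.2.2 (nGap_gt p)))
    simp only [hy_def, if_pos h1]
    exact hp.2.1 i hi
  obtain ⟨d, hdD, hdy⟩ := dens D x n₀ hcl y hy (nGap p + 1)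
  refine ⟨d, hdD, fun i hi => ?_, ?_⟩
  · rw [hdy i (Nat.lt_succ_of_lt hi)]
    simp only [hy_def, if_pos hi]
  · rw [hdy _ (Nat.lt_succ_self _)]
    simp [hy_def]

/-- One step of the scheme. -/
def stepP (p : ℕ × (ℕ → Bool)) (hp : Good D x n₀ p) : Bool → ℕ × (ℕ → Bool)
  | false => (nGap p, p.2)
  | true => (nGap p + 1, (exists_true D x n₀ hcl p hp).choose)

lemma stepP_good (p : ℕ × (ℕ → Bool)) (hp : Good D x n₀ p) (b : Bool) :
    Good D x n₀ (stepP D x n₀ hcl p hp b) := by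
  cases b with
  | false =>
      exact ⟨hp.1, hp.2.1, le_trans hp.2.2 (le_of_lt (nGap_gt p))⟩
  | true =>
      obtain ⟨h1, h2, _⟩ := (exists_true D x n₀ hcl p hp).choose_spec
      refine ⟨h1, fun i hi => ?_, ?_⟩
      · show (exists_true D x n₀ hcl p hp).choose i = x i
        rw [h2 i (lt_of_lt_of_le hi (le_of_lt (lt_of_le_of_lt hp.2.2 (nGap_gt p))))]
        exact hp.2.1 i hi
      · exact le_trans (le_trans hp.2.2 (le_of_lt (nGap_gt p))) (Nat.le_succ _)

lemma stepP_fst_lt (p : ℕ × (ℕ → Bool)) (hp : Good D x n₀ p) (b : Bool) :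
    p.1 < (stepP D x n₀ hcl p hp b).1 := by
  cases b with
  | false => exact nGap_gt p
  | true => exact lt_trans (nGap_gt p) (Nat.lt_succ_self _)

lemma stepP_agree (p : ℕ × (ℕ → Bool)) (hp : Good D x n₀ p) (b : Bool) :
    ∀ i ≤ p.1, (stepP D x n₀ hcl p hp b).2 i = p.2 i := by
  intro i hi
  cases b with
  | false => rfl
  | true =>
      exact (exists_true D x n₀ hcl p hp).choose_spec.2.1 i
        (lt_of_le_of_lt hi (nGap_gt p))

/-- The scheme: to each finite (reversed) binary string assign a pair
(length of determined prefix, a designated point of `D` through it). -/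
def node : List Bool → {p : ℕ × (ℕ → Bool) // Good D x n₀ p}
  | [] => ⟨(n₀, (dens D x n₀ hcl x (fun _ _ => rfl) n₀).choose), by
      obtain ⟨h1, h2⟩ := (dens D x n₀ hcl x (fun _ _ => rfl) n₀).choose_spec
      exact ⟨h1, h2, le_refl _⟩⟩
  | b :: t => ⟨stepP D x n₀ hcl (node t).1 (node t).2 b,
      stepP_good D x n₀ hcl (node t).1 (node t).2 b⟩

def nodeN (t : List Bool) : ℕ := (node D x n₀ hcl t).1.1

def nodeD (t : List Bool) : ℕ → Bool := (node D x n₀ hcl t).1.2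

lemma nodeD_mem (t : List Bool) : nodeD D x n₀ hcl t ∈ D :=
  (node D x n₀ hcl t).2.1

lemma node_cons (b : Bool) (t : List Bool) :
    (node D x n₀ hcl (b :: t)).1
      = stepP D x n₀ hcl (node D x n₀ hcl t).1 (node D x n₀ hcl t).2 b := rfl

lemma nodeN_cons_lt (b : Bool) (t : List Bool) :
    nodeN D x n₀ hcl t < nodeN D x n₀ hcl (b :: t) :=
  stepP_fst_lt D x n₀ hcl (node D x n₀ hcl t).1 (node D x n₀ hcl t).2 b

lemma nodeN_ge (t : List Bool) : t.length + n₀ ≤ nodeN D x n₀ hcl t := by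
  induction t with
  | nil => simp [nodeN, node]
  | cons b t ih =>
      have := nodeN_cons_lt D x n₀ hcl b t
      simp only [List.length_cons]
      omega

lemma nodeD_cons_agree (b : Bool) (t : List Bool) :
    ∀ i ≤ nodeN D x n₀ hcl t, nodeD D x n₀ hcl (b :: t) i = nodeD D x n₀ hcl t i :=
  stepP_agree D x n₀ hcl (node D x n₀ hcl t).1 (node D x n₀ hcl t).2 b

lemma nodeN_append (u t : List Bool) :
    nodeN D x n₀ hcl t ≤ nodeN D x n₀ hcl (u ++ t) := by
  induction u with
  | nil => exact le_refl _
  | cons b u ih => exact le_trans ih (le_of_lt (nodeN_cons_lt D x n₀ hcl b (u ++ t)))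

lemma nodeD_append (u t : List Bool) :
    ∀ i ≤ nodeN D x n₀ hcl t, nodeD D x n₀ hcl (u ++ t) i = nodeD D x n₀ hcl t i := by
  induction u with
  | nil => intro i _; rfl
  | cons b u ih =>
      intro i hi
      have h2 : i ≤ nodeN D x n₀ hcl (u ++ t) :=
        le_trans hi (nodeN_append D x n₀ hcl u t)
      rw [show (b :: u) ++ t = b :: (u ++ t) from rfl,
        nodeD_cons_agree D x n₀ hcl b (u ++ t) i h2]
      exact ih i hi

/-- Reversed prefix of a sequence. -/
def preR (α : ℕ → Bool) : ℕ → List Bool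
  | 0 => []
  | k + 1 => α k :: preR α k

lemma preR_length (α : ℕ → Bool) (k : ℕ) : (preR α k).length = k := by
  induction k with
  | zero => rfl
  | succ k ih => simp [preR, ih]

lemma preR_split (α : ℕ → Bool) {j k : ℕ} (h : j ≤ k) :
    ∃ u, preR α k = u ++ preR α j := by
  induction k with
  | zero =>
      have : j = 0 := Nat.le_zero.mp h
      subst this; exact ⟨[], rfl⟩
  | succ k ih =>
      rcases Nat.lt_or_ge j (k + 1) with h1 | h1
      · obtain ⟨u, hu⟩ := ih (Nat.lt_succ_iff.mp h1)
        exact ⟨α k :: u, by simp [preR, hu]⟩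
      · have : j = k + 1 := le_antisymm h h1
        subst this; exact ⟨[], rfl⟩

lemma preR_congr {α β : ℕ → Bool} {k : ℕ} (h : ∀ i < k, α i = β i) :
    preR α k = preR β k := by
  induction k with
  | zero => rfl
  | succ k ih =>
      simp only [preR]
      rw [h k (Nat.lt_succ_self k), ih (fun i hi => h i (Nat.lt_succ_of_lt hi))]

lemma nodeN_preR_ge (α : ℕ → Bool) (k : ℕ) :
    k ≤ nodeN D x n₀ hcl (preR α k) := by
  have := nodeN_ge D x n₀ hcl (preR α k)
  rw [preR_length] at this
  omega

/-- The map. -/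
def fIn (α : ℕ → Bool) : ℕ → Bool :=
  fun m => nodeD D x n₀ hcl (preR α (m + 1)) m

lemma fIn_eq (α : ℕ → Bool) (k m : ℕ) (h : m ≤ nodeN D x n₀ hcl (preR α k)) :
    fIn D x n₀ hcl α m = nodeD D x n₀ hcl (preR α k) m := by
  rcases Nat.le_total k (m + 1) with hk | hk
  · obtain ⟨u, hu⟩ := preR_split α hk
    show nodeD D x n₀ hcl (preR α (m + 1)) m = _
    rw [hu]
    exact nodeD_append D x n₀ hcl u (preR α k) m h
  · obtain ⟨u, hu⟩ := preR_split α hk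
    have h2 : m ≤ nodeN D x n₀ hcl (preR α (m + 1)) :=
      le_trans (Nat.le_succ m) (nodeN_preR_ge D x n₀ hcl α (m + 1))
    show nodeD D x n₀ hcl (preR α (m + 1)) m = _
    rw [hu, nodeD_append D x n₀ hcl u (preR α (m + 1)) m h2]

lemma nodeD_cons_false (t : List Bool) :
    nodeD D x n₀ hcl (false :: t) = nodeD D x n₀ hcl t := rfl

lemma nodeN_cons_false (t : List Bool) :
    nodeN D x n₀ hcl (false :: t) = nGap (node D x n₀ hcl t).1 := rfl

lemma nodeN_cons_true (t : List Bool) :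
    nodeN D x n₀ hcl (true :: t) = nGap (node D x n₀ hcl t).1 + 1 := rfl

lemma nodeD_cons_true_top (t : List Bool) :
    nodeD D x n₀ hcl (true :: t) (nGap (node D x n₀ hcl t).1) = true :=
  (exists_true D x n₀ hcl (node D x n₀ hcl t).1 (node D x n₀ hcl t).2).choose_spec.2.2

lemma fIn_mapsTo_D (α : ℕ → Bool) (hα : α ∈ Pfin) : fIn D x n₀ hcl α ∈ D := by
  obtain ⟨N, hN⟩ := hα
  have hconst : ∀ j : ℕ, nodeD D x n₀ hcl (preR α (N + j)) = nodeD D x n₀ hcl (preR α N) := by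
    intro j
    induction j with
    | zero => rfl
    | succ j ih =>
        have hfalse : α (N + j) = false := hN _ (Nat.le_add_right N j)
        have : preR α (N + (j + 1)) = false :: preR α (N + j) := by
          show preR α ((N + j) + 1) = _
          rw [preR, hfalse]
        rw [this, nodeD_cons_false, ih]
  have : fIn D x n₀ hcl α = nodeD D x n₀ hcl (preR α N) := by
    funext m
    have hk : m ≤ nodeN D x n₀ hcl (preR α (N + (m + 1))) :=
      le_trans (by omega) (nodeN_preR_ge D x n₀ hcl α (N + (m + 1)))
    rw [fIn_eq D x n₀ hcl α (N + (m + 1)) m hk, hconst (m + 1)]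
  rw [this]
  exact nodeD_mem D x n₀ hcl (preR α N)

lemma fIn_mapsTo_compl (hD : D ⊆ Pfin) (α : ℕ → Bool) (hα : α ∉ Pfin) :
    fIn D x n₀ hcl α ∉ Pfin := by
  intro ⟨N, hN⟩
  have hα' : ∀ M : ℕ, ∃ j, M ≤ j ∧ α j = true := by
    intro M
    by_contra hc
    push_neg at hc
    exact hα ⟨M, fun n hn => by
      have := hc n hn
      cases h : α n with
      | false => rfl
      | true => exact absurd h this⟩
  obtain ⟨j, hjN, hjtrue⟩ := hα' N
  set t := preR α j with ht
  set g := nGap (node D x n₀ hcl t).1 with hg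
  have hgN : N ≤ g := by
    have h1 : j ≤ nodeN D x n₀ hcl t := nodeN_preR_ge D x n₀ hcl α j
    have h2 : nodeN D x n₀ hcl t < g := nGap_gt _
    omega
  have hpre : preR α (j + 1) = true :: t := by rw [preR, hjtrue]
  have hle : g ≤ nodeN D x n₀ hcl (preR α (j + 1)) := by
    rw [hpre, nodeN_cons_true]
    omega
  have : fIn D x n₀ hcl α g = true := by
    rw [fIn_eq D x n₀ hcl α (j + 1) g hle, hpre]
    exact nodeD_cons_true_top D x n₀ hcl t
  rw [hN g hgN] at this
  exact Bool.false_ne_true this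

lemma fIn_key (hD : D ⊆ Pfin) (α β : ℕ → Bool) (h : fIn D x n₀ hcl α = fIn D x n₀ hcl β)
    (m : ℕ) (hm : ∀ i < m, α i = β i) : α m = β m := by
  have ht : preR α m = preR β m := preR_congr hm
  set t := preR α m with htdef
  set g := nGap (node D x n₀ hcl t).1 with hg
  have claim : ∀ γ : ℕ → Bool, preR γ m = t → fIn D x n₀ hcl γ g = γ m := by
    intro γ hγ
    have hγ1 : preR γ (m + 1) = γ m :: t := by rw [preR, hγ]
    cases hc : γ m with
    | true =>
        have hle : g ≤ nodeN D x n₀ hcl (preR γ (m + 1)) := by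
          rw [hγ1, hc, nodeN_cons_true]; omega
        rw [fIn_eq D x n₀ hcl γ (m + 1) g hle, hγ1, hc]
        exact nodeD_cons_true_top D x n₀ hcl t
    | false =>
        have hle : g ≤ nodeN D x n₀ hcl (preR γ (m + 1)) := by
          rw [hγ1, hc, nodeN_cons_false]
        rw [fIn_eq D x n₀ hcl γ (m + 1) g hle, hγ1, hc, nodeD_cons_false]
        exact supN_spec (hD (nodeD_mem D x n₀ hcl t)) (le_max_right _ _)
  have h1 := claim α rfl
  have h2 := claim β ht.symm
  rw [← h1, ← h2, h]

lemma fIn_inj (hD : D ⊆ Pfin) : Function.Injective (fIn D x n₀ hcl) := by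
  intro α β h
  funext m
  induction m using Nat.strong_induction_on with
  | _ m ih => exact fIn_key D x n₀ hcl hD α β h m ih

lemma fIn_cont : Continuous (fIn D x n₀ hcl) := by
  apply continuous_pi
  intro m
  let g : (Fin (m + 1) → Bool) → Bool := fun v =>
    nodeD D x n₀ hcl (preR (fun i => if h : i < m + 1 then v ⟨i, h⟩ else false) (m + 1)) m
  have hfactor : (fun α => fIn D x n₀ hcl α m)
      = g ∘ (fun (α : ℕ → Bool) (i : Fin (m + 1)) => α i) := by
    funext α
    show nodeD D x n₀ hcl (preR α (m + 1)) m = _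
    simp only [Function.comp, g]
    rw [preR_congr (α := α)
      (β := fun i => if h : i < m + 1 then α (⟨i, h⟩ : Fin (m + 1)) else false)
      (fun i hi => by simp [hi])]
  rw [hfactor]
  exact continuous_of_discreteTopology.comp (continuous_pi fun i => continuous_apply (i : ℕ))

end

end IntoNwd

theorem into_non_nwd_subset_of_rationals
    (D : Set (ℕ → Bool)) (hD : D ⊆ Pfin) (hnwd : ¬ IsNowhereDense D) :
    ∃ f : (ℕ → Bool) → (ℕ → Bool), Function.Injective f ∧ Continuous f ∧
      Set.MapsTo f Pfin D ∧ Set.MapsTo f Pfinᶜ Pfinᶜ := by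
  have hne : (interior (closure D)).Nonempty := by
    rw [Set.nonempty_iff_ne_empty]
    exact hnwd
  obtain ⟨x, hx⟩ := hne
  obtain ⟨I, u, hu, hsub⟩ := (isOpen_pi_iff.1 isOpen_interior) x hx
  set n₀ := I.sup id + 1 with hn₀
  have hcl : ∀ y : ℕ → Bool, (∀ i < n₀, y i = x i) → y ∈ closure D := by
    intro y hy
    apply interior_subset
    apply hsub
    intro i hi
    have hi' : i < n₀ := by
      have := Finset.le_sup (f := id) hi
      simp only [id] at this
      omega
    rw [hy i hi']
    exact (hu i hi).2
  refine ⟨IntoNwd.fIn D x n₀ hcl, IntoNwd.fIn_inj D x n₀ hcl hD,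
    IntoNwd.fIn_cont D x n₀ hcl, fun α hα => IntoNwd.fIn_mapsTo_D D x n₀ hcl α hα,
    fun α hα => IntoNwd.fIn_mapsTo_compl D x n₀ hcl hD α hα⟩
end

section
/- Let G be a subset of 2^ω contained in P_∞, having the Baire property and non-meager. Then there is an injective continuous map f : 2^ω → 2^ω such that f maps P_∞ into G and maps P_f into P_f. -/
/-- A set has the Baire property if it differs from an open set by a meager set. -/
def HasBaireProperty {X : Type*} [TopologicalSpace X] (A : Set X) : Prop :=
  ∃ U : Set X, IsOpen U ∧ IsMeagre ((A \ U) ∪ (U \ A))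

/-!
Since `G` has the Baire property and is not meagre, it is comeagre in some cylinder `[u₀]`:
there are dense open sets `D₀ ⊇ D₁ ⊇ ⋯` with `[u₀] ∩ ⋂ Dₙ ⊆ G`. Starting from `u₀`, read `α`
bit by bit: a `0` appends `0`, while a `1` at step `n` appends `1` followed by a string `R` that
pushes the cylinder into `Dₙ`. The limit map is continuous and injective, since `α n` is written
at the position where the stage `n` string ends. A sequence with infinitely many `1`s is sent
into every `Dₙ`, hence into `G`; an eventually-zero sequence is sent to an eventually-zero one.
-/

open Set Filter Topology PiNat

section Baire

variable {X : Type*} [TopologicalSpace X]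

lemma HasBaireProperty.exists_isOpen_nonempty_isMeagre_diff {G : Set X}
    (hBP : HasBaireProperty G) (hG : ¬ IsMeagre G) :
    ∃ U, IsOpen U ∧ U.Nonempty ∧ IsMeagre (U \ G) := by
  obtain ⟨U, hU, hUG⟩ := hBP
  refine ⟨U, hU, nonempty_iff_ne_empty.2 ?_, hUG.mono subset_union_right⟩
  rintro rfl
  exact hG (hUG.mono fun x hx => Or.inl ⟨hx, notMem_empty x⟩)

lemma IsMeagre.exists_antitone_isOpen_dense [BaireSpace X] {M : Set X} (hM : IsMeagre M) :
    ∃ D : ℕ → Set X, Antitone D ∧ (∀ n, IsOpen (D n)) ∧ (∀ n, Dense (D n)) ∧ ⋂ n, D n ⊆ Mᶜ := by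
  obtain ⟨t, htM, htGδ, ht⟩ := mem_residual.1 hM
  obtain ⟨f, hf, rfl⟩ := isGδ_iff_eq_iInter_nat.1 htGδ
  refine ⟨fun n => ⋂ i ∈ Iic n, f i,
    fun m n hmn => biInter_subset_biInter_left (Iic_subset_Iic.2 hmn),
    fun n => (finite_Iic n).isOpen_biInter fun i _ => hf i,
    fun n => ht.mono (subset_iInter₂ fun i _ => iInter_subset f i), ?_⟩
  exact (iInter_mono fun n => biInter_subset_of_mem self_mem_Iic).trans htM

end Baire

lemma exists_cylinder_subset_of_isOpen {E : ℕ → Type*} [∀ n, TopologicalSpace (E n)]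
    [∀ n, DiscreteTopology (E n)] {U : Set (∀ n, E n)} (hU : IsOpen U) {x : ∀ n, E n}
    (hx : x ∈ U) : ∃ n, cylinder x n ⊆ U := by
  obtain ⟨_, ⟨y, n, rfl⟩, hxy, hyU⟩ :=
    (isTopologicalBasis_cylinders E).exists_subset_of_mem_open hx hU
  exact ⟨n, (mem_cylinder_iff_eq.1 hxy).le.trans hyU⟩

namespace CantorSpace

def cyl (u : List Bool) : Set (ℕ → Bool) := cylinder (fun i => u.getD i false) u.length

lemma isOpen_cyl (u : List Bool) : IsOpen (cyl u) := isOpen_cylinder _ _ _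

lemma mem_cyl {u : List Bool} {x : ℕ → Bool} :
    x ∈ cyl u ↔ ∀ i < u.length, x i = u.getD i false :=
  mem_cylinder_iff

lemma _root_.IsOpen.exists_cyl_append_subset {U : Set (ℕ → Bool)} (hU : IsOpen U) {u : List Bool}
    (h : (cyl u ∩ U).Nonempty) : ∃ w, cyl (u ++ w) ⊆ U := by
  obtain ⟨x, hxu, hxU⟩ := h
  obtain ⟨n, hn⟩ := exists_cylinder_subset_of_isOpen hU hxU
  refine ⟨List.ofFn fun i : Fin n => x (u.length + i), fun y hy => hn fun i hi => ?_⟩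
  rw [mem_cyl.1 hy i (by simp; omega)]
  rcases lt_or_ge i u.length with h | h
  · rw [List.getD_append _ _ _ _ h, ← mem_cyl.1 hxu i h]
  · rw [List.getD_append_right _ _ _ _ h, List.getD_eq_getElem _ _ (by simp; omega)]
    simp [Nat.add_sub_cancel' h]

lemma _root_.Dense.exists_cyl_append_subset {D : Set (ℕ → Bool)} (hD : Dense D) (hDo : IsOpen D)
    (u : List Bool) : ∃ w, cyl (u ++ w) ⊆ D :=
  hDo.exists_cyl_append_subset (hD.inter_open_nonempty _ (isOpen_cyl u) ⟨_, self_mem_cylinder _ _⟩)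

lemma exists_cyl_inter_iInter_subset {G : Set (ℕ → Bool)} (hBP : HasBaireProperty G)
    (hG : ¬ IsMeagre G) : ∃ (u₀ : List Bool) (D : ℕ → Set (ℕ → Bool)), Antitone D ∧
      (∀ n, IsOpen (D n)) ∧ (∀ n, Dense (D n)) ∧ cyl u₀ ∩ ⋂ n, D n ⊆ G := by
  obtain ⟨U, hU, hUne, hUG⟩ := hBP.exists_isOpen_nonempty_isMeagre_diff hG
  obtain ⟨u₀, hu₀⟩ := hU.exists_cyl_append_subset (u := []) (by simpa [cyl] using hUne)
  obtain ⟨D, hDanti, hDo, hDd, hDG⟩ :=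
    (hUG.mono (sdiff_subset_sdiff_left hu₀)).exists_antitone_isOpen_dense
  refine ⟨u₀, D, hDanti, hDo, hDd, fun y ⟨hyu, hyD⟩ => ?_⟩
  by_contra hyG
  exact hDG hyD ⟨hyu, hyG⟩

lemma exists_ge_eq_true_of_notMem_Pfin {α : ℕ → Bool} (hα : α ∉ Pfin) (m : ℕ) :
    ∃ n ≥ m, α n = true := by
  by_contra! h
  exact hα ⟨m, fun n hn => by simpa using h n hn⟩

variable (u₀ : List Bool) (R : List Bool → ℕ → List Bool)

def stage : ℕ → (ℕ → Bool) → List Bool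
  | 0, _ => u₀
  | n + 1, α => stage n α ++ (α n :: if α n then R (stage n α) n else [])

def schemeLimit (α : ℕ → Bool) (k : ℕ) : Bool := (stage u₀ R (k + 1) α).getD k false

variable {u₀ R}

lemma stage_congr {n : ℕ} {α β : ℕ → Bool} (h : ∀ i < n, α i = β i) :
    stage u₀ R n α = stage u₀ R n β := by
  induction n with
  | zero => rfl
  | succ n ih => simp only [stage, ih fun i hi => h i (by omega), h n n.lt_succ_self]

lemma stage_prefix {m n : ℕ} (hmn : m ≤ n) (α : ℕ → Bool) :
    stage u₀ R m α <+: stage u₀ R n α := by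
  induction n, hmn using Nat.le_induction with
  | base => exact List.prefix_rfl
  | succ n _ ih => exact ih.trans (List.prefix_append _ _)

lemma le_length_stage (n : ℕ) (α : ℕ → Bool) : n ≤ (stage u₀ R n α).length := by
  induction n with
  | zero => exact Nat.zero_le _
  | succ n ih => simp only [stage, List.length_append, List.length_cons]; omega

lemma getD_stage_of_le {m n k : ℕ} (hmn : m ≤ n) {α : ℕ → Bool}
    (hk : k < (stage u₀ R m α).length) :
    (stage u₀ R n α).getD k false = (stage u₀ R m α).getD k false := by
  obtain ⟨t, ht⟩ := stage_prefix hmn α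
  rw [← ht, List.getD_append _ _ _ _ hk]

lemma schemeLimit_eq_getD {n k : ℕ} {α : ℕ → Bool} (hk : k < (stage u₀ R n α).length) :
    schemeLimit u₀ R α k = (stage u₀ R n α).getD k false := by
  rcases le_total (k + 1) n with h | h
  · exact (getD_stage_of_le h ((le_length_stage _ α).trans_lt' k.lt_succ_self)).symm
  · exact getD_stage_of_le h hk

lemma schemeLimit_mem_cyl (α : ℕ → Bool) (n : ℕ) :
    schemeLimit u₀ R α ∈ cyl (stage u₀ R n α) :=
  mem_cyl.2 fun _ hk => schemeLimit_eq_getD hk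

lemma schemeLimit_length_stage (α : ℕ → Bool) (n : ℕ) :
    schemeLimit u₀ R α (stage u₀ R n α).length = α n := by
  rw [schemeLimit_eq_getD (n := n + 1) (by simp [stage]), stage,
    List.getD_append_right _ _ _ _ le_rfl]
  simp

lemma schemeLimit_injective : Function.Injective (schemeLimit u₀ R) := by
  intro α β hαβ
  by_contra hne
  apply apply_firstDiff_ne hne
  rw [← schemeLimit_length_stage α, ← schemeLimit_length_stage β,
    hαβ, stage_congr fun i hi => apply_eq_of_lt_firstDiff hi]

lemma continuous_schemeLimit : Continuous (schemeLimit u₀ R) := by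
  refine continuous_pi fun k => IsLocallyConstant.continuous <|
    (IsLocallyConstant.iff_exists_open _).2 fun α => ⟨cylinder α (k + 1), isOpen_cylinder _ _ _,
      self_mem_cylinder _ _, fun β hβ => ?_⟩
  simp only [schemeLimit, stage_congr (mem_cylinder_iff.1 hβ)]

lemma stage_add_of_forall_eq_false {N : ℕ} {α : ℕ → Bool} (hN : ∀ n ≥ N, α n = false) (m : ℕ) :
    stage u₀ R (N + m) α = stage u₀ R N α ++ List.replicate m false := by
  induction m with
  | zero => simp
  | succ m ih => simp [stage, ih, hN (N + m) (by omega), List.replicate_succ']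

lemma mapsTo_schemeLimit_Pfin : MapsTo (schemeLimit u₀ R) Pfin Pfin := by
  rintro α ⟨N, hN⟩
  refine ⟨(stage u₀ R N α).length, fun k hk => ?_⟩
  have hNk : N ≤ k + 1 := by linarith [le_length_stage (u₀ := u₀) (R := R) N α]
  rw [schemeLimit, ← Nat.add_sub_cancel' hNk, stage_add_of_forall_eq_false hN,
    List.getD_append_right _ _ _ _ hk]
  simp

lemma schemeLimit_mem_cyl_of_eq_true {α : ℕ → Bool} {n : ℕ} (h : α n = true) :
    schemeLimit u₀ R α ∈ cyl (stage u₀ R n α ++ true :: R (stage u₀ R n α) n) := by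
  simpa [stage, h] using schemeLimit_mem_cyl α (n + 1)

end CantorSpace

open CantorSpace

theorem into_nonmeager_subset_of_irrationals_general
    (G : Set (ℕ → Bool)) (hBP : HasBaireProperty G)
    (hnm : ¬ IsMeagre G) :
    ∃ f : (ℕ → Bool) → (ℕ → Bool), Function.Injective f ∧ Continuous f ∧
      Set.MapsTo f Pfinᶜ G ∧ Set.MapsTo f Pfin Pfin := by
  obtain ⟨u₀, D, hDanti, hDo, hDd, hDG⟩ := exists_cyl_inter_iInter_subset hBP hnm
  choose R hR using fun u n => (hDd n).exists_cyl_append_subset (hDo n) (u ++ [true])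
  refine ⟨schemeLimit u₀ R, schemeLimit_injective, continuous_schemeLimit,
    fun α hα => hDG ⟨schemeLimit_mem_cyl α 0, mem_iInter.2 fun m => ?_⟩, mapsTo_schemeLimit_Pfin⟩
  obtain ⟨n, hmn, hn⟩ := exists_ge_eq_true_of_notMem_Pfin hα m
  exact hDanti hmn (hR _ n (by simpa using schemeLimit_mem_cyl_of_eq_true (R := R) hn))

theorem into_nonmeager_subset_of_irrationals
    (G : Set (ℕ → Bool)) (hG : G ⊆ Pfinᶜ) (hBP : HasBaireProperty G)
    (hnm : ¬ IsMeagre G) :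
    ∃ f : (ℕ → Bool) → (ℕ → Bool), Function.Injective f ∧ Continuous f ∧
      Set.MapsTo f Pfinᶜ G ∧ Set.MapsTo f Pfin Pfin :=
  into_nonmeager_subset_of_irrationals_general G hBP hnm
end

section
/- Let b : P_∞ → 2^ω be a continuous map which is nowhere dense-to-one, i.e., b⁻¹({γ}) is nowhere dense in 2^ω for every γ ∈ 2^ω. Then there is an injective continuous map f : 2^ω → 2^ω such that f⁻¹(P_f) = P_f and b(f(α)) ≠ b(f(β)) whenever α ≠ β are both in P_∞. -/
/-- The set of binary sequences with infinitely many ones. -/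
def Pinf : Set (ℕ → Bool) := Pfinᶜ

/-!
Build a binary tree of cylinders `[q↾N]` of Cantor space, each centred at an eventually-zero
point `q`, and send a branch `α` to the point lying in all the cylinders along it. A `0`-child
keeps the centre, so an eventually-zero branch is sent to a centre, while every `1`-child forces
a new `1` in its cylinder; this gives `f⁻¹(P_f) = P_f`.

By compactness, `b` has a cluster value `θ(q)` at each `q` (approached from `P_∞`). Since the
fibres of `b` are nowhere dense, near `q` there is `y ∈ P_∞` such that `b y` agrees with `θ(q)` up
to a prescribed precision `k` but differs from it at some `j`, and by continuity so does `b` on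
the whole `1`-child cylinder around `y`. If `α` and `β` first differ at `d`, with `α d = 0` and
`β d = 1`, then `b (f β)` differs from `θ(q)` at `j`; but `α` keeps the centre `q` until its next
`1`, and the precision of that `1`-child exceeds `j`, so `b (f α)` agrees with `θ(q)` at `j`.
-/

open Set Filter Topology PiNat

section DenseSubtype

variable {X Y : Type*} [TopologicalSpace X] {s : Set X} {g : s → Y} {θ : Y}

theorem exists_ne_of_isNowhereDense_fiber (hs : Dense s)
    (hθ : IsNowhereDense (Subtype.val '' (g ⁻¹' {θ}))) {V : Set s} (hV : IsOpen V)
    (hne : V.Nonempty) : ∃ z ∈ V, g z ≠ θ := by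
  by_contra! h
  obtain ⟨U, hU, rfl⟩ := isOpen_induced_iff.mp hV
  obtain ⟨x, hxU⟩ := hne
  have hsub : U ⊆ closure (Subtype.val '' (g ⁻¹' {θ})) :=
    (hs.open_subset_closure_inter hU).trans <|
      closure_mono fun y ⟨hyU, hys⟩ => ⟨⟨y, hys⟩, h ⟨y, hys⟩ hyU, rfl⟩
  have := interior_maximal hsub hU hxU
  rwa [hθ] at this

theorem MapClusterPt.exists_ne_of_isNowhereDense_fiber [TopologicalSpace Y] {x : X} (hs : Dense s)
    (hg : Continuous g) (hθ : MapClusterPt θ (comap Subtype.val (𝓝 x)) g)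
    (hfib : IsNowhereDense (Subtype.val '' (g ⁻¹' {θ}))) {U : Set X} {W : Set Y}
    (hU : U ∈ 𝓝 x) (hW : W ∈ 𝓝 θ) : ∃ y : s, ↑y ∈ U ∧ g y ∈ W ∧ g y ≠ θ := by
  have hV : IsOpen (Subtype.val ⁻¹' interior U ∩ g ⁻¹' interior W) :=
    (isOpen_interior.preimage continuous_subtype_val).inter (isOpen_interior.preimage hg)
  obtain ⟨y, hgy, hy⟩ := ((hθ.frequently (interior_mem_nhds.2 hW)).and_eventually
    (preimage_mem_comap (interior_mem_nhds.2 hU))).exists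
  obtain ⟨z, ⟨hzU, hzW⟩, hz⟩ := _root_.exists_ne_of_isNowhereDense_fiber hs hfib hV ⟨y, hy, hgy⟩
  exact ⟨z, interior_subset hzU, interior_subset hzW, hz⟩

theorem Dense.exists_mapClusterPt_comap_val [TopologicalSpace Y] [CompactSpace Y] (hs : Dense s)
    (g : s → Y) (x : X) : ∃ θ, MapClusterPt θ (comap Subtype.val (𝓝 x)) g :=
  haveI := hs.isDenseEmbedding_val.isDenseInducing.comap_nhds_neBot x
  exists_clusterPt_of_compactSpace _

end DenseSubtype

section Cylinder

variable {E : ℕ → Type*} [∀ n, TopologicalSpace (E n)] [∀ n, DiscreteTopology (E n)]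

theorem PiNat.cylinder_mem_nhds (x : ∀ n, E n) (n : ℕ) : cylinder x n ∈ 𝓝 x :=
  (isOpen_cylinder E x n).mem_nhds (self_mem_cylinder x n)

theorem PiNat.nhds_hasBasis_cylinder (x : ∀ n, E n) :
    (𝓝 x).HasBasis (fun _ => True) (cylinder x) := by
  refine ⟨fun U => ⟨fun hU => ?_, fun ⟨n, _, hn⟩ => mem_of_superset (cylinder_mem_nhds x n) hn⟩⟩
  obtain ⟨_, ⟨y, n, rfl⟩, hx, hsub⟩ := (isTopologicalBasis_cylinders E).mem_nhds_iff.1 hU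
  exact ⟨n, trivial, (mem_cylinder_iff_eq.1 hx).symm ▸ hsub⟩

theorem Continuous.exists_cylinder_mapsTo {F : ℕ → Type*} [∀ n, TopologicalSpace (F n)]
    [∀ n, DiscreteTopology (F n)] {s : Set (∀ n, E n)} {g : s → ∀ n, F n} (hg : Continuous g)
    (y : s) (m : ℕ) : ∃ N, ∀ z : s, ↑z ∈ cylinder (y : ∀ n, E n) N → g z ∈ cylinder (g y) m := by
  have := (((nhds_hasBasis_cylinder (y : ∀ n, E n)).comap Subtype.val).tendsto_iff
    (nhds_hasBasis_cylinder (g y))).1 (by rw [← nhds_subtype]; exact hg.continuousAt) m trivial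
  simpa using this

end Cylinder

theorem mem_Pinf_iff {α : ℕ → Bool} : α ∈ Pinf ↔ ∀ N, ∃ n ≥ N, α n = true := by
  simp [Pinf, Pfin]

def padWith {A : Type*} (x : ℕ → A) (n : ℕ) (c : A) : ℕ → A := fun i => if i < n then x i else c

theorem padWith_mem_cylinder {A : Type*} (x : ℕ → A) (n : ℕ) (c : A) :
    padWith x n c ∈ cylinder x n :=
  fun _ hi => if_pos hi

theorem padWith_false_mem_Pfin (x : ℕ → Bool) (n : ℕ) : padWith x n false ∈ Pfin :=
  ⟨n, fun _ hi => if_neg (Nat.not_lt.2 hi)⟩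

theorem padWith_true_mem_Pinf (x : ℕ → Bool) (n : ℕ) : padWith x n true ∈ Pinf :=
  mem_Pinf_iff.2 fun N => ⟨max N n, le_max_left _ _, if_neg (by omega)⟩

theorem dense_Pinf : Dense Pinf :=
  (isTopologicalBasis_cylinders _).dense_iff.2 fun _ ⟨x, n, hx⟩ _ =>
    ⟨padWith x n true, hx ▸ padWith_mem_cylinder x n true, padWith_true_mem_Pinf x n⟩

noncomputable def clusterValue (b : Pinf → (ℕ → Bool)) (q : ℕ → Bool) : ℕ → Bool :=
  (dense_Pinf.exists_mapClusterPt_comap_val b q).choose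

theorem mapClusterPt_clusterValue (b : Pinf → (ℕ → Bool)) (q : ℕ → Bool) :
    MapClusterPt (clusterValue b q) (comap Subtype.val (𝓝 q)) b :=
  (dense_Pinf.exists_mapClusterPt_comap_val b q).choose_spec

namespace NowhereDenseToOne

/-- The cylinder `[q↾N]`, with the precision `k` to which `b` agrees with the cluster value of `b`
at `q` on the cylinder of the `1`-child. -/
structure Node where
  q : ℕ → Bool
  N : ℕ
  k : ℕ
  q_mem : q ∈ Pfin

def Node.cyl (d : Node) : Set (ℕ → Bool) := cylinder d.q d.N

theorem Node.q_mem_cyl (d : Node) : d.q ∈ d.cyl := self_mem_cylinder _ _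

def root : Node := ⟨fun _ => false, 0, 0, 0, fun _ _ => rfl⟩

variable (b : Pinf → (ℕ → Bool))

structure IsSplit (d : Node) (e : Bool → Node) : Prop where
  N_lt : ∀ c, d.N < (e c).N
  cyl_subset : ∀ c, (e c).cyl ⊆ d.cyl
  disjoint : Disjoint (e false).cyl (e true).cyl
  q_false : (e false).q = d.q
  k_le : d.k ≤ (e false).k
  exists_true : ∃ t ≥ d.N, ∀ x ∈ (e true).cyl, x t = true
  agree : ∀ z : Pinf, ↑z ∈ (e true).cyl → b z ∈ cylinder (clusterValue b d.q) d.k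
  separate : ∃ j < (e false).k, ∀ z : Pinf, ↑z ∈ (e true).cyl → b z j ≠ clusterValue b d.q j

variable {b}

theorem exists_isSplit (hb : Continuous b)
    (hfib : ∀ γ : ℕ → Bool, IsNowhereDense (Subtype.val '' (b ⁻¹' {γ}))) (d : Node) :
    ∃ e, IsSplit b d e := by
  set θ := clusterValue b d.q
  obtain ⟨y, hyq, hyθ, hyne⟩ := (mapClusterPt_clusterValue b d.q).exists_ne_of_isNowhereDense_fiber
    dense_Pinf hb (hfib θ) (cylinder_mem_nhds d.q d.N) (cylinder_mem_nhds θ d.k)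
  obtain ⟨j, hj⟩ := Function.ne_iff.1 hyne
  obtain ⟨Nc, hNc⟩ := hb.exists_cylinder_mapsTo y (max d.k (j + 1))
  obtain ⟨jq, hjq⟩ := Function.ne_iff.1 fun h : (y : ℕ → Bool) = d.q => y.2 (h ▸ d.q_mem)
  have hNjq : d.N ≤ jq := le_of_not_gt fun h => hjq (hyq jq h)
  obtain ⟨t, hNt, ht⟩ := mem_Pinf_iff.1 y.2 d.N
  set N₁ := Nc + jq + t + 1
  set e₀ : Node := ⟨d.q, jq + 1, max d.k (j + 1), d.q_mem⟩
  set e₁ : Node := ⟨padWith y N₁ false, N₁, 0, padWith_false_mem_Pfin _ _⟩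
  have he₁ : e₁.cyl = cylinder y N₁ := mem_cylinder_iff_eq.1 (padWith_mem_cylinder _ _ _)
  have hbz : ∀ z : Pinf, ↑z ∈ e₁.cyl → ∀ i < max d.k (j + 1), b z i = b y i :=
    fun z hz => hNc z (cylinder_anti _ (by omega) (he₁ ▸ hz))
  refine ⟨fun c => bif c then e₁ else e₀, ⟨?_, ?_, ?_, rfl, le_max_left _ _, ?_, ?_, ?_⟩⟩
  · rintro (_ | _)
    · show d.N < jq + 1
      omega
    · show d.N < N₁
      omega
  · rintro (_ | _)
    · exact cylinder_anti d.q (show d.N ≤ jq + 1 by omega)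
    · show e₁.cyl ⊆ d.cyl
      rw [he₁, Node.cyl, ← mem_cylinder_iff_eq.1 hyq]
      exact cylinder_anti _ (by omega)
  · refine Set.disjoint_left.2 fun x (hx₀ : x ∈ e₀.cyl) (hx₁ : x ∈ e₁.cyl) => hjq ?_
    rw [he₁] at hx₁
    exact (hx₁ jq (by omega)).symm.trans (hx₀ jq (by simp [e₀]))
  · exact ⟨t, hNt, fun x (hx : x ∈ e₁.cyl) => by rw [he₁] at hx; exact (hx t (by omega)).trans ht⟩
  · exact fun z hz i hi => (hbz z hz i (lt_max_of_lt_left hi)).trans (hyθ i hi)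
  · exact ⟨j, lt_max_of_lt_right j.lt_succ_self, fun z hz => hbz z hz j (by omega) ▸ hj⟩

variable (σ : Node → Bool → Node)

def nodeAlong (α : ℕ → Bool) : ℕ → Node
  | 0 => root
  | n + 1 => σ (nodeAlong α n) (α n)

def treeMap (α : ℕ → Bool) : ℕ → Bool := fun i => (nodeAlong σ α (i + 1)).q i

variable {σ}

theorem nodeAlong_congr {α β : ℕ → Bool} {n : ℕ} (h : ∀ i < n, α i = β i) :
    nodeAlong σ α n = nodeAlong σ β n := by
  induction n with
  | zero => rfl
  | succ n ih => simp only [nodeAlong, h n n.lt_succ_self, ih fun i hi => h i (by omega)]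

theorem continuous_treeMap : Continuous (treeMap σ) :=
  continuous_pi fun i => continuous_iff_continuousAt.2 fun α =>
    tendsto_const_nhds.congr' <| mem_of_superset (cylinder_mem_nhds α (i + 1)) fun β hβ => by
      show (nodeAlong σ α (i + 1)).q i = (nodeAlong σ β (i + 1)).q i
      rw [nodeAlong_congr fun l hl => (hβ l hl).symm]

theorem IsSplit.disjoint_of_ne {d : Node} {e : Bool → Node} (h : IsSplit b d e) {c c' : Bool}
    (hc : c ≠ c') : Disjoint (e c).cyl (e c').cyl := by
  cases c <;> cases c'
  all_goals first | exact absurd rfl hc | exact h.disjoint | exact h.disjoint.symm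

theorem le_N_nodeAlong (hσ : ∀ d, IsSplit b d (σ d)) (α : ℕ → Bool) (n : ℕ) :
    n ≤ (nodeAlong σ α n).N := by
  induction n with
  | zero => exact Nat.zero_le _
  | succ n ih => exact ih.trans_lt ((hσ _).N_lt _)

theorem cyl_nodeAlong_anti (hσ : ∀ d, IsSplit b d (σ d)) (α : ℕ → Bool) {n m : ℕ} (h : n ≤ m) :
    (nodeAlong σ α m).cyl ⊆ (nodeAlong σ α n).cyl := by
  induction h with
  | refl => exact Subset.rfl
  | step _ ih => exact ((hσ _).cyl_subset _).trans ih

theorem treeMap_mem_cyl (hσ : ∀ d, IsSplit b d (σ d)) (α : ℕ → Bool) (n : ℕ) :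
    treeMap σ α ∈ (nodeAlong σ α n).cyl := by
  intro i hi
  have hq := (nodeAlong σ α (max n (i + 1))).q_mem_cyl
  exact (cyl_nodeAlong_anti hσ α (le_max_right _ _) hq i (le_N_nodeAlong hσ α (i + 1))).symm.trans
    (cyl_nodeAlong_anti hσ α (le_max_left _ _) hq i hi)

theorem treeMap_mem_cyl_succ (hσ : ∀ d, IsSplit b d (σ d)) (α : ℕ → Bool) (n : ℕ) :
    treeMap σ α ∈ (σ (nodeAlong σ α n) (α n)).cyl :=
  treeMap_mem_cyl hσ α (n + 1)

theorem treeMap_injective (hσ : ∀ d, IsSplit b d (σ d)) : Function.Injective (treeMap σ) := by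
  intro α β hαβ
  by_contra hne
  have hβ := treeMap_mem_cyl_succ hσ β (firstDiff α β)
  rw [← nodeAlong_congr fun i hi => apply_eq_of_lt_firstDiff hi, ← hαβ] at hβ
  exact ((hσ _).disjoint_of_ne (apply_firstDiff_ne hne)).ne_of_mem
    (treeMap_mem_cyl_succ hσ α _) hβ rfl

theorem nodeAlong_of_forall_false (hσ : ∀ d, IsSplit b d (σ d)) {α : ℕ → Bool} {K n : ℕ}
    (hKn : K ≤ n) (h : ∀ m, K ≤ m → m < n → α m = false) :
    (nodeAlong σ α n).q = (nodeAlong σ α K).q ∧ (nodeAlong σ α K).k ≤ (nodeAlong σ α n).k := by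
  induction hKn with
  | refl => exact ⟨rfl, le_rfl⟩
  | @step n hKn ih =>
    obtain ⟨hq, hk⟩ := ih fun m h₁ h₂ => h m h₁ (by omega)
    show (σ _ (α n)).q = _ ∧ _ ≤ (σ _ (α n)).k
    rw [h n hKn n.lt_succ_self]
    exact ⟨(hσ _).q_false.trans hq, hk.trans (hσ _).k_le⟩

theorem treeMap_mem_Pfin (hσ : ∀ d, IsSplit b d (σ d)) {α : ℕ → Bool} (hα : α ∈ Pfin) :
    treeMap σ α ∈ Pfin := by
  obtain ⟨K, hK⟩ := hα
  suffices treeMap σ α = (nodeAlong σ α K).q from this ▸ (nodeAlong σ α K).q_mem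
  funext i
  rw [← (nodeAlong_of_forall_false hσ (le_max_left K (i + 1)) fun m hm _ => hK m hm).1]
  exact treeMap_mem_cyl hσ α _ i ((le_N_nodeAlong hσ α _).trans_lt' (by omega))

theorem treeMap_mem_Pinf (hσ : ∀ d, IsSplit b d (σ d)) {α : ℕ → Bool} (hα : α ∈ Pinf) :
    treeMap σ α ∈ Pinf := by
  refine mem_Pinf_iff.2 fun n => ?_
  obtain ⟨m, hmn, hm⟩ := mem_Pinf_iff.1 hα n
  obtain ⟨t, ht, htrue⟩ := (hσ (nodeAlong σ α m)).exists_true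
  have hcyl := treeMap_mem_cyl_succ hσ α m
  rw [hm] at hcyl
  exact ⟨t, hmn.trans ((le_N_nodeAlong hσ α m).trans ht), htrue _ hcyl⟩

theorem preimage_treeMap_Pfin (hσ : ∀ d, IsSplit b d (σ d)) : treeMap σ ⁻¹' Pfin = Pfin :=
  Set.ext fun _ => ⟨fun h => by_contra fun hα => treeMap_mem_Pinf hσ hα h, treeMap_mem_Pfin hσ⟩

theorem b_treeMap_mem_cylinder_of_false (hσ : ∀ d, IsSplit b d (σ d)) {α : ℕ → Bool}
    (hα : α ∈ Pinf) {d : ℕ} (hαd : α d = false) :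
    b ⟨treeMap σ α, treeMap_mem_Pinf hσ hα⟩ ∈
      cylinder (clusterValue b (nodeAlong σ α d).q) (σ (nodeAlong σ α d) false).k := by
  classical
  have hex : ∃ p, d < p ∧ α p = true := mem_Pinf_iff.1 hα (d + 1)
  obtain ⟨hdp, hp⟩ := Nat.find_spec hex
  obtain ⟨hq, hk⟩ := nodeAlong_of_forall_false hσ hdp fun m hm hmp =>
    Bool.eq_false_iff.2 fun h => Nat.find_min hex hmp ⟨hm, h⟩
  have hcyl := treeMap_mem_cyl_succ hσ α (Nat.find hex)
  rw [hp] at hcyl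
  have hd : nodeAlong σ α (d + 1) = σ (nodeAlong σ α d) false := by rw [nodeAlong, hαd]
  rw [hd] at hq hk
  rw [(hσ _).q_false] at hq
  exact fun i hi => hq ▸ (hσ _).agree _ hcyl i (hi.trans_le hk)

theorem b_treeMap_ne_of_false_of_true (hσ : ∀ d, IsSplit b d (σ d)) {α β : ℕ → Bool}
    (hα : α ∈ Pinf) (hβ : β ∈ Pinf) {d : ℕ} (hagree : ∀ i < d, α i = β i) (hαd : α d = false)
    (hβd : β d = true) :
    b ⟨treeMap σ α, treeMap_mem_Pinf hσ hα⟩ ≠ b ⟨treeMap σ β, treeMap_mem_Pinf hσ hβ⟩ := by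
  obtain ⟨j, hjk, hj⟩ := (hσ (nodeAlong σ α d)).separate
  have hβcyl := treeMap_mem_cyl_succ hσ β d
  rw [hβd, ← nodeAlong_congr hagree] at hβcyl
  intro heq
  apply hj ⟨_, treeMap_mem_Pinf hσ hβ⟩ hβcyl
  rw [← heq]
  exact b_treeMap_mem_cylinder_of_false hσ hα hαd j hjk

theorem b_treeMap_ne_of_ne (hσ : ∀ d, IsSplit b d (σ d)) {α β : ℕ → Bool} (hα : α ∈ Pinf)
    (hβ : β ∈ Pinf) (hne : α ≠ β) :
    b ⟨treeMap σ α, treeMap_mem_Pinf hσ hα⟩ ≠ b ⟨treeMap σ β, treeMap_mem_Pinf hσ hβ⟩ := by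
  have hagree : ∀ i < firstDiff α β, α i = β i := fun _ hi => apply_eq_of_lt_firstDiff hi
  have hd := apply_firstDiff_ne hne
  cases hαd : α (firstDiff α β) <;> cases hβd : β (firstDiff α β) <;> rw [hαd, hβd] at hd
  · exact absurd rfl hd
  · exact b_treeMap_ne_of_false_of_true hσ hα hβ hagree hαd hβd
  · exact (b_treeMap_ne_of_false_of_true hσ hβ hα (fun i hi => (hagree i hi).symm) hβd hαd).symm
  · exact absurd rfl hd

end NowhereDenseToOne

open NowhereDenseToOne in
theorem injectivize_nowhere_dense_to_one
    (b : Pinf → (ℕ → Bool)) (hb : Continuous b)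
    (hfib : ∀ γ : ℕ → Bool, IsNowhereDense (Subtype.val '' (b ⁻¹' {γ}))) :
    ∃ f : (ℕ → Bool) → (ℕ → Bool), Function.Injective f ∧ Continuous f ∧
      f ⁻¹' Pfin = Pfin ∧
      ∃ hmap : ∀ α, α ∈ Pinf → f α ∈ Pinf,
        ∀ α β (hα : α ∈ Pinf) (hβ : β ∈ Pinf), α ≠ β →
          b ⟨f α, hmap α hα⟩ ≠ b ⟨f β, hmap β hβ⟩ := by
  choose σ hσ using exists_isSplit hb hfib
  exact ⟨treeMap σ, treeMap_injective hσ, continuous_treeMap, preimage_treeMap_Pfin hσ,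
    fun _ => treeMap_mem_Pinf hσ, fun _ _ hα hβ => b_treeMap_ne_of_ne hσ hα hβ⟩
end

section
/- Let b : P_∞ → 2^ω be continuous and nowhere dense-to-one, and let β ∈ P_f. Then there is a sequence (s_q)_{q∈ω} of finite binary sequences such that for every q: |s_q| > q; s_q agrees with β on its first q coordinates; s_q is not an initial segment of β; and for all p ≠ q, b[N_{s_p} ∩ P_∞] ∩ b[N_{s_q} ∩ P_∞] = ∅. -/
/-- The basic clopen set of sequences extending the finite sequence `s`. -/
def cyl (s : List Bool) : Set (ℕ → Bool) := {α | ∀ i < s.length, α i = s.getD i false}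

/-!
Since the fibres of `b` are nowhere dense and `P_∞` is dense, one can pick points
`x_n ∈ P_∞ ∩ N_{β↾n}` whose images are pairwise distinct. By compactness a subsequence of
`b(x_n)` converges to some `γ` distinct from all its terms, and after thinning further the first
place `e_k` at which `b(x_k)` differs from `γ` is strictly increasing. The clopen sets
`N_{b(x_k)↾(e_k+1)}` are pairwise disjoint, since each of their points first differs from `γ` at
`e_k`. Continuity of `b` gives a prefix `s_k` of `x_k` whose cylinder is mapped into the `k`-th
of them, and lengthening `s_k` past a place where `x_k ∈ P_∞` differs from `β ∈ P_f` keeps it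
off `β`.
-/

open Set Filter Topology PiNat

section NowhereDense

variable {X Y : Type*} [TopologicalSpace X]

theorem IsNowhereDense.union {s t : Set X} (hs : IsNowhereDense s) (ht : IsNowhereDense t) :
    IsNowhereDense (s ∪ t) := by
  rwa [IsNowhereDense, closure_union, interior_union_isClosed_of_interior_empty isClosed_closure ht]

theorem Set.Finite.isNowhereDense_biUnion {ι : Type*} {I : Set ι} (hI : I.Finite) {s : ι → Set X}
    (hs : ∀ i ∈ I, IsNowhereDense (s i)) : IsNowhereDense (⋃ i ∈ I, s i) := by
  induction I, hI using Set.Finite.induction_on with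
  | empty => simp
  | @insert i I _ _ ih =>
    rw [biUnion_insert]
    exact (hs i (mem_insert i I)).union (ih fun j hj => hs j (mem_insert_of_mem i hj))

variable {D : Set X} {f : D → Y}

theorem Dense.exists_mem_open_apply_notMem (hD : Dense D)
    (hf : ∀ y, IsNowhereDense (Subtype.val '' (f ⁻¹' {y}))) {F : Set Y} (hF : F.Finite)
    {V : Set X} (hV : IsOpen V) (hVne : V.Nonempty) : ∃ x : D, ↑x ∈ V ∧ f x ∉ F := by
  set B := Subtype.val '' (f ⁻¹' F)
  have hB : IsNowhereDense B := by
    refine (hF.isNowhereDense_biUnion fun y _ => hf y).mono ?_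
    rintro _ ⟨x, hx, rfl⟩
    exact mem_iUnion₂.2 ⟨f x, hx, x, rfl, rfl⟩
  have hVB : (V \ closure B).Nonempty := by
    by_contra h
    rw [not_nonempty_iff_eq_empty, sdiff_eq_empty, ← hV.subset_interior_iff, hB] at h
    exact hVne.ne_empty (subset_empty_iff.1 h)
  obtain ⟨x, hxD, hxV, hxB⟩ := hD.exists_mem_open (hV.sdiff isClosed_closure) hVB
  exact ⟨⟨x, hxD⟩, hxV, fun hx => hxB (subset_closure ⟨_, hx, rfl⟩)⟩

theorem Dense.exists_seq_mem_injective (hD : Dense D)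
    (hf : ∀ y, IsNowhereDense (Subtype.val '' (f ⁻¹' {y}))) {U : ℕ → Set X}
    (hUo : ∀ n, IsOpen (U n)) (hUne : ∀ n, (U n).Nonempty) (hU : Antitone U) :
    ∃ x : ℕ → D, (∀ n, ↑(x n) ∈ U n) ∧ (f ∘ x).Injective := by
  -- each point is chosen together with the index of the open set it lies in
  obtain ⟨p, hpU, hp⟩ := exists_seq_of_forall_finset_exists (fun p : ℕ × D => ↑p.2 ∈ U p.1)
    (fun p q => p.1 < q.1 ∧ f p.2 ≠ f q.2) fun s _ => by
      obtain ⟨x, hxU, hx⟩ := hD.exists_mem_open_apply_notMem hf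
        (s.finite_toSet.image fun p => f p.2) (hUo (s.sup Prod.fst + 1)) (hUne _)
      exact ⟨(s.sup Prod.fst + 1, x), hxU, fun p hp =>
        ⟨Nat.lt_succ_of_le (s.le_sup (f := Prod.fst) hp), fun h => hx ⟨p, hp, h⟩⟩⟩
  have hmono : StrictMono fun n => (p n).1 := fun m n h => (hp m n h).1
  refine ⟨fun n => (p n).2, fun n => hU hmono.le_apply (hpU n), fun m n hmn => ?_⟩
  by_contra hne
  rcases lt_or_gt_of_ne hne with h | h
  · exact (hp m n h).2 hmn
  · exact (hp n m h).2 hmn.symm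

end NowhereDense

theorem exists_subseq_tendsto_ne {Y : Type*} [TopologicalSpace Y] [CompactSpace Y]
    [FirstCountableTopology Y] {y : ℕ → Y} (hy : y.Injective) :
    ∃ (γ : Y) (φ : ℕ → ℕ), StrictMono φ ∧ Tendsto (y ∘ φ) atTop (𝓝 γ) ∧ ∀ k, y (φ k) ≠ γ := by
  obtain ⟨γ, -, φ, hφ, hlim⟩ := isCompact_univ.tendsto_subseq (x := y) fun _ => mem_univ _
  have hev : ∀ᶠ k in atTop, y (φ k) ≠ γ := by
    by_cases h : ∃ k, y (φ k) = γ
    · obtain ⟨k₀, hk₀⟩ := h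
      filter_upwards [eventually_gt_atTop k₀] with k hk
      rw [← hk₀]
      exact hy.ne (hφ hk).ne'
    · push Not at h
      exact Eventually.of_forall h
  obtain ⟨ψ, hψ, hne⟩ := extraction_of_eventually_atTop hev
  exact ⟨γ, φ ∘ ψ, hφ.comp hψ, hlim.comp hψ.tendsto_atTop, hne⟩

namespace PiNat

variable {E : ℕ → Type*}

theorem firstDiff_eq_of_mem_cylinder_succ {x y w : ∀ n, E n} (hxy : x ≠ y)
    (hw : w ∈ cylinder x (firstDiff x y + 1)) : firstDiff w y = firstDiff x y := by
  have hwx : w (firstDiff x y) = x (firstDiff x y) := hw _ (Nat.lt_succ_self _)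
  have hne : w (firstDiff x y) ≠ y (firstDiff x y) := hwx ▸ apply_firstDiff_ne hxy
  have hwy : w ≠ y := fun h => hne (h ▸ rfl)
  refine le_antisymm (not_lt.1 fun h => hne (apply_eq_of_lt_firstDiff h)) ?_
  rw [← mem_cylinder_iff_le_firstDiff hwy]
  intro i hi
  rw [hw i (hi.trans (Nat.lt_succ_self _))]
  exact apply_eq_of_lt_firstDiff hi

theorem disjoint_cylinder_firstDiff_succ {x y γ : ∀ n, E n} (hx : x ≠ γ) (hy : y ≠ γ)
    (h : firstDiff x γ ≠ firstDiff y γ) :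
    Disjoint (cylinder x (firstDiff x γ + 1)) (cylinder y (firstDiff y γ + 1)) :=
  disjoint_left.2 fun _ hwx hwy =>
    h ((firstDiff_eq_of_mem_cylinder_succ hx hwx).symm.trans
      (firstDiff_eq_of_mem_cylinder_succ hy hwy))

variable [∀ n, TopologicalSpace (E n)] [∀ n, DiscreteTopology (E n)]

theorem hasBasis_nhds_cylinder (x : ∀ n, E n) : (𝓝 x).HasBasis (fun _ => True) (cylinder x) := by
  refine ⟨fun t => ⟨fun ht => ?_, fun ⟨n, _, hn⟩ =>
    mem_of_superset ((isOpen_cylinder _ x n).mem_nhds (self_mem_cylinder x n)) hn⟩⟩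
  obtain ⟨V, hVt, hVo, hxV⟩ := mem_nhds_iff.1 ht
  obtain ⟨_, ⟨y, n, rfl⟩, hx, hsub⟩ :=
    (isTopologicalBasis_cylinders E).exists_subset_of_mem_open hxV hVo
  rw [← mem_cylinder_iff_eq.1 hx] at hsub
  exact ⟨n, trivial, hsub.trans hVt⟩

theorem tendsto_firstDiff_atTop {y : ℕ → ∀ n, E n} {γ : ∀ n, E n}
    (hy : Tendsto y atTop (𝓝 γ)) (hne : ∀ k, y k ≠ γ) :
    Tendsto (fun k => firstDiff (y k) γ) atTop atTop :=
  tendsto_atTop.2 fun M => ((hasBasis_nhds_cylinder γ).tendsto_right_iff.1 hy M trivial).mono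
    fun k hk => (mem_cylinder_iff_le_firstDiff (hne k) M).1 hk

theorem exists_subseq_strictMono_firstDiff [∀ n, Finite (E n)] {y : ℕ → ∀ n, E n}
    (hy : y.Injective) :
    ∃ (γ : ∀ n, E n) (φ : ℕ → ℕ), StrictMono φ ∧ (∀ k, y (φ k) ≠ γ) ∧
      StrictMono fun k => firstDiff (y (φ k)) γ := by
  obtain ⟨γ, φ, hφ, hlim, hne⟩ := exists_subseq_tendsto_ne hy
  obtain ⟨ψ, hψ, hmono⟩ := strictMono_subseq_of_tendsto_atTop (tendsto_firstDiff_atTop hlim hne)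
  exact ⟨γ, φ ∘ ψ, hφ.comp hψ, fun k => hne (ψ k), hmono⟩

theorem _root_.ContinuousAt.exists_cylinder_subset {Y : Type*} [TopologicalSpace Y]
    {s : Set (∀ n, E n)} {f : s → Y} {x : s} (hf : ContinuousAt f x) {W : Set Y}
    (hW : W ∈ 𝓝 (f x)) : ∃ n, ∀ z : s, ↑z ∈ cylinder (x : ∀ n, E n) n → f z ∈ W := by
  have h : f ⁻¹' W ∈ 𝓝 x := hf hW
  rw [nhds_subtype, ((hasBasis_nhds_cylinder _).comap _).mem_iff] at h
  obtain ⟨n, -, hn⟩ := h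
  exact ⟨n, fun z hz => hn hz⟩

end PiNat

theorem List.getD_map_range {α : Type*} (x : ℕ → α) (d : α) {n i : ℕ} (h : i < n) :
    ((List.range n).map x).getD i d = x i := by
  simp [h]

theorem cyl_map_range (x : ℕ → Bool) (n : ℕ) : cyl ((List.range n).map x) = cylinder x n := by
  ext y
  simp only [cyl, mem_ofPred_eq, List.length_map, List.length_range, mem_cylinder_iff]
  exact forall₂_congr fun i hi => by rw [List.getD_map_range _ _ hi]

theorem exists_long_prefixes_not_prefix {z : ℕ → ℕ → Bool} {β : ℕ → Bool}
    (hzβ : ∀ k, z k ∈ cylinder β k) (hne : ∀ k, z k ≠ β) (n : ℕ → ℕ) :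
    ∃ s : ℕ → List Bool, (∀ q, q < (s q).length) ∧ (∀ q, ∀ i < q, (s q).getD i false = β i) ∧
      (∀ q, ¬ ∀ i < (s q).length, (s q).getD i false = β i) ∧
      ∀ q, cyl (s q) ⊆ cylinder (z q) (n q) := by
  choose d hd using fun k => Function.ne_iff.1 (hne k)
  obtain ⟨L, hnL, hkL, hdL⟩ : ∃ L : ℕ → ℕ, (∀ k, n k ≤ L k) ∧ (∀ k, k < L k) ∧ ∀ k, d k < L k :=
    ⟨fun k => max (n k) (max k (d k) + 1), fun _ => le_max_left _ _,
      fun _ => by dsimp only; omega, fun _ => by dsimp only; omega⟩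
  refine ⟨fun k => (List.range (L k)).map (z k), fun q => ?_, fun q i hi => ?_, fun q hq => ?_,
    fun q => ?_⟩
  · simpa only [List.length_map, List.length_range] using hkL q
  · rw [List.getD_map_range _ _ (hi.trans (hkL q))]
    exact hzβ q i hi
  · have h := hq (d q) (by simpa only [List.length_map, List.length_range] using hdL q)
    rw [List.getD_map_range _ _ (hdL q)] at h
    exact hd q h
  · rw [cyl_map_range]
    exact cylinder_anti _ (hnL q)

theorem separating_sequences_exist
    (b : Pinf → (ℕ → Bool)) (hb : Continuous b)
    (hfib : ∀ γ : ℕ → Bool, IsNowhereDense (Subtype.val '' (b ⁻¹' {γ})))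
    (β : ℕ → Bool) (hβ : β ∈ Pfin) :
    ∃ s : ℕ → List Bool,
      (∀ q : ℕ, q < (s q).length) ∧
      (∀ q : ℕ, ∀ i < q, (s q).getD i false = β i) ∧
      (∀ q : ℕ, ¬ (∀ i < (s q).length, (s q).getD i false = β i)) ∧
      (∀ p q : ℕ, p ≠ q →
        (b '' {x : Pinf | (x : ℕ → Bool) ∈ cyl (s p)}) ∩
          (b '' {x : Pinf | (x : ℕ → Bool) ∈ cyl (s q)}) = ∅) := by
  obtain ⟨x, hxβ, hinj⟩ := dense_Pinf.exists_seq_mem_injective hfib (isOpen_cylinder _ β)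
    (fun n => ⟨β, self_mem_cylinder β n⟩) fun _ _ h => cylinder_anti β h
  obtain ⟨γ, φ, hφ, hne, hmono⟩ := exists_subseq_strictMono_firstDiff hinj
  set z : ℕ → Pinf := x ∘ φ
  set V : ℕ → Set (ℕ → Bool) := fun k => cylinder (b (z k)) (firstDiff (b (z k)) γ + 1)
  choose n hn using fun k => hb.continuousAt.exists_cylinder_subset
    ((isOpen_cylinder _ (b (z k)) _).mem_nhds (self_mem_cylinder _ _) : V k ∈ 𝓝 (b (z k)))
  obtain ⟨s, hlen, hpre, hoff, hsub⟩ := exists_long_prefixes_not_prefix (z := fun k => z k)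
    (fun k => cylinder_anti β hφ.le_apply (hxβ (φ k))) (fun k h => (z k).2 (h ▸ hβ)) n
  have himage : ∀ k, b '' {y : Pinf | ↑y ∈ cyl (s k)} ⊆ V k := by
    rintro k _ ⟨y, hy, rfl⟩
    exact hn k y (hsub k hy)
  refine ⟨s, hlen, hpre, hoff, fun p q hpq => disjoint_iff_inter_eq_empty.1 ?_⟩
  exact (disjoint_cylinder_firstDiff_succ (hne p) (hne q) (hmono.injective.ne hpq)).mono
    (himage p) (himage q)
end

section
/- There is an injective continuous map f : 2^ω → 2^ω reducing the equivalence relation 𝔼 (defined by α 𝔼 β ⇔ (α, β ∈ P_f) ∨ α = β) to the relation E₀ of eventual equality: for all α, β ∈ 2^ω, α 𝔼 β if and only if f(α) and f(β) agree from some coordinate on. -/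
theorem reduce_to_E0 :
    ∃ f : (ℕ → Bool) → (ℕ → Bool), Function.Injective f ∧ Continuous f ∧
      ∀ α β : ℕ → Bool,
        (((α ∈ Pfin ∧ β ∈ Pfin) ∨ α = β) ↔ ∃ N : ℕ, ∀ n ≥ N, f α n = f β n) := by
  set f : (ℕ → Bool) → (ℕ → Bool) := fun α k =>
    if (Nat.unpair k).2 = 0 then α (Nat.unpair k).1
    else if α (Nat.unpair k).1 = true ∧ (Nat.unpair k).2 ≤ (Nat.unpair k).1
      then α ((Nat.unpair k).2 - 1) else false with hf
  have key : ∀ α n, f α (Nat.pair n 0) = α n := by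
    intro α n; simp [hf]
  have key2 : ∀ (α : ℕ → Bool) (n j : ℕ), j ≠ 0 → f α (Nat.pair n j) =
      (if α n = true ∧ j ≤ n then α (j - 1) else false) := by
    intro α n j hj; simp [hf, hj]
  refine ⟨f, ?_, ?_, ?_⟩
  · intro α β h
    funext n
    have := congrFun h (Nat.pair n 0)
    rwa [key, key] at this
  · apply continuous_pi
    intro k
    by_cases h0 : (Nat.unpair k).2 = 0
    · simpa [hf, h0] using (continuous_apply (Nat.unpair k).1)
    · have heq : (fun α : ℕ → Bool => f α k) = (fun p : Bool × Bool =>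
          if p.1 = true ∧ (Nat.unpair k).2 ≤ (Nat.unpair k).1 then p.2 else false) ∘
          (fun α => (α (Nat.unpair k).1, α ((Nat.unpair k).2 - 1))) := by
        funext α; simp [hf, h0]
      rw [heq]
      exact continuous_of_discreteTopology.comp
        ((continuous_apply _).prodMk (continuous_apply _))
  · intro α β
    constructor
    · rintro (⟨⟨N₁, h₁⟩, ⟨N₂, h₂⟩⟩ | rfl)
      · refine ⟨(max N₁ N₂) * (max N₁ N₂) + (max N₁ N₂), fun k hk => ?_⟩
        obtain ⟨n, j, rfl⟩ : ∃ n j, k = Nat.pair n j :=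
          ⟨_, _, (Nat.pair_unpair k).symm⟩
        set N := max N₁ N₂ with hN
        by_cases hn : N ≤ n
        · have ha : α n = false := h₁ n (le_trans (le_max_left _ _) hn)
          have hb : β n = false := h₂ n (le_trans (le_max_right _ _) hn)
          by_cases hj : j = 0
          · subst hj; rw [key, key, ha, hb]
          · rw [key2 _ _ _ hj, key2 _ _ _ hj]
            simp [ha, hb]
        · push_neg at hn
          have hjn : n < j := by
            by_contra hle
            push_neg at hle
            have hkeq : Nat.pair n j = n * n + n + j := by
              rw [Nat.pair]; rw [if_neg (not_lt.mpr hle)]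
            rw [hkeq] at hk
            nlinarith
          have hj0 : j ≠ 0 := by omega
          rw [key2 _ _ _ hj0, key2 _ _ _ hj0]
          rw [if_neg (by omega : ¬ (α n = true ∧ j ≤ n)),
            if_neg (by omega : ¬ (β n = true ∧ j ≤ n))]
      · exact ⟨0, fun _ _ => rfl⟩
    · rintro ⟨K, hK⟩
      have hag : ∀ n ≥ K, α n = β n := by
        intro n hn
        have := hK (Nat.pair n 0) (le_trans hn (Nat.left_le_pair n 0))
        rwa [key, key] at this
      by_cases hab : α = β
      · exact Or.inr hab
      · left
        obtain ⟨m, hmne⟩ := Function.ne_iff.mp hab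
        have hmK : m < K := by
          by_contra hge
          exact hmne (hag m (by omega))
        have hzero : ∀ n ≥ K, α n = false := by
          intro n hn
          by_contra hT
          have h1 : α n = true := by
            cases hb : α n with
            | false => exact absurd hb hT
            | true => rfl
          have h2 : β n = true := by rw [← hag n hn]; exact h1
          have hk : K ≤ Nat.pair n (m + 1) := le_trans hn (Nat.left_le_pair _ _)
          have := hK _ hk
          rw [key2 _ _ _ (by omega), key2 _ _ _ (by omega),
            if_pos ⟨h1, by omega⟩, if_pos ⟨h2, by omega⟩] at this
          simp at this
          exact hmne this
        refine ⟨⟨K, hzero⟩, ⟨K, fun n hn => ?_⟩⟩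
        rw [← hag n hn]; exact hzero n hn
end
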